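/- arXiv:1806.00632 — 5 statements merged into one kernel-verified Lean document; each statement's English description precedes it below -/
import Mathlib

section
/- If MPVC-generalized quasinormality holds at a feasible point x* ∈ C, then a local error bound holds: there exist δ > 0 and c > 0 such that for every x ∈ ℝ^n with ‖x − x*‖₁ < δ/2, dist₁(x, C) ≤ c·(Σ_{j=1}^l |h_j(x)| + Σ_{i=1}^m max{0, g_i(x)} + Σ_{i=1}^q dist₁((G_i(x), H_i(x)), Ω)), where dist₁ denotes distance with respect to the ℓ¹-norm and Ω = {(a,b) ∈ ℝ² : b ≥ 0 and ab ≤ 0}. -/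
open Filter Topology

/-- The MPVC feasible set
`C = {x | g i x ≤ 0, h j x = 0, H i x ≥ 0, G i x * H i x ≤ 0}`. -/
def feasSet {n m l q : ℕ} (g : Fin m → (Fin n → ℝ) → ℝ) (h : Fin l → (Fin n → ℝ) → ℝ)
    (G H : Fin q → (Fin n → ℝ) → ℝ) : Set (Fin n → ℝ) :=
  {x | (∀ i, g i x ≤ 0) ∧ (∀ j, h j x = 0) ∧ (∀ i, 0 ≤ H i x) ∧ (∀ i, G i x * H i x ≤ 0)}

/-- Conditions (i)–(ii) on an MPVC multiplier `(lam, mu, etaG, etaH)` at a feasible point. -/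
def MultCond {n m l q : ℕ} (g : Fin m → (Fin n → ℝ) → ℝ) (h : Fin l → (Fin n → ℝ) → ℝ)
    (G H : Fin q → (Fin n → ℝ) → ℝ) (xs : Fin n → ℝ)
    (lam : Fin m → ℝ) (mu : Fin l → ℝ) (etaG etaH : Fin q → ℝ) : Prop :=
  ((∑ i, lam i • fderiv ℝ (g i) xs) + (∑ j, mu j • fderiv ℝ (h j) xs)
      + (∑ i, etaG i • fderiv ℝ (G i) xs) - (∑ i, etaH i • fderiv ℝ (H i) xs) = 0)
  ∧ (∀ i, g i xs = 0 → 0 ≤ lam i)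
  ∧ (∀ i, g i xs ≠ 0 → lam i = 0)
  ∧ (∀ i, (0 < H i xs ∧ G i xs < 0) ∨ (H i xs = 0 ∧ G i xs < 0) ∨ (H i xs = 0 ∧ 0 < G i xs) →
      etaG i = 0)
  ∧ (∀ i, (0 < H i xs ∧ G i xs = 0) ∨ (H i xs = 0 ∧ G i xs = 0) → 0 ≤ etaG i)
  ∧ (∀ i, 0 < H i xs → etaH i = 0)
  ∧ (∀ i, H i xs = 0 ∧ G i xs < 0 → 0 ≤ etaH i)
  ∧ (∀ i, H i xs = 0 ∧ G i xs = 0 → etaH i * etaG i = 0)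

/-- MPVC-generalized quasinormality at a feasible point `xs`: there is no nonzero multiplier
satisfying (i)–(ii) together with the sequence condition (iii). -/
def GenQuasinormal {n m l q : ℕ} (g : Fin m → (Fin n → ℝ) → ℝ) (h : Fin l → (Fin n → ℝ) → ℝ)
    (G H : Fin q → (Fin n → ℝ) → ℝ) (xs : Fin n → ℝ) : Prop :=
  ¬ ∃ (lam : Fin m → ℝ) (mu : Fin l → ℝ) (etaG etaH : Fin q → ℝ),
      (lam ≠ 0 ∨ mu ≠ 0 ∨ etaG ≠ 0 ∨ etaH ≠ 0)
      ∧ MultCond g h G H xs lam mu etaG etaH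
      ∧ ∃ xk : ℕ → (Fin n → ℝ), Tendsto xk atTop (𝓝 xs) ∧ ∀ k,
          (∀ i, 0 < lam i → 0 < lam i * g i (xk k))
          ∧ (∀ j, mu j ≠ 0 → 0 < mu j * h j (xk k))
          ∧ (∀ i, etaH i ≠ 0 → etaH i * H i (xk k) < 0)
          ∧ (∀ i, 0 < etaG i → 0 < etaG i * G i (xk k))

/-- The set `Ω = {(a,b) ∈ ℝ² : b ≥ 0, ab ≤ 0}` describing a single vanishing constraint pair. -/
def OmegaVC : Set (ℝ × ℝ) := {p | 0 ≤ p.2 ∧ p.1 * p.2 ≤ 0}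

/-- The ℓ¹-distance from a point `x ∈ ℝⁿ` to a set `S ⊆ ℝⁿ`. -/
noncomputable def l1DistSet {n : ℕ} (x : Fin n → ℝ) (S : Set (Fin n → ℝ)) : ℝ :=
  sInf ((fun y => ∑ i, |x i - y i|) '' S)

/-- The ℓ¹-distance from a point of `ℝ²` to the set `Ω`. -/
noncomputable def l1DistOmega (p : ℝ × ℝ) : ℝ :=
  sInf ((fun w => |p.1 - w.1| + |p.2 - w.2|) '' OmegaVC)

/-!
If the bound fails, there are points `x_k → x*` whose ℓ¹-distance `d_k` to `C` exceeds `k + 1`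
times their residual. Let `R` be the sum of the squared Euclidean constraint violations, so that
`√R ≤ residual`. A global minimiser `y_k` of `√R + ‖· - x_k‖₁ / (k + 1)` (a finite-dimensional
Ekeland point) lies within `d_k` of `x_k`, hence is infeasible. Replacing the minimum in the
squared distance to `Ω` by the branch active at `y_k` gives a differentiable majorant of `R`,
exact at `y_k`, so the gradient of its square root at `y_k` has norm at most `n / (k + 1)`. That
gradient is the Lagrangian derivative at the constraint violations normalised to a unit vector,
and these multipliers inherit sign conditions from the violations. A limit point of them is a
nonzero multiplier satisfying (i)–(ii), and the violations along `y_k → x*` witness (iii),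
contradicting quasinormality.
-/

namespace MPVC

theorem hasDerivAt_max_zero_sq (t : ℝ) : HasDerivAt (fun s => max 0 s ^ 2) (2 * max 0 t) t := by
  have off_zero : ∀ s : ℝ, s ≠ 0 → HasDerivAt (fun s => max 0 s ^ 2) (2 * max 0 s) s := by
    intro s hs
    rcases hs.lt_or_gt with hs | hs
    · have hloc : (fun s => max 0 s ^ 2) =ᶠ[𝓝 s] fun _ => (0 : ℝ) := by
        filter_upwards [gt_mem_nhds hs] with u hu
        simp [hu.le]
      simpa [hs.le] using (hasDerivAt_const s (0 : ℝ)).congr_of_eventuallyEq hloc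
    · have hloc : (fun s => max 0 s ^ 2) =ᶠ[𝓝 s] fun u => u ^ 2 := by
        filter_upwards [lt_mem_nhds hs] with u hu
        simp [hu.le]
      simpa [hs.le, mul_comm] using (hasDerivAt_pow 2 s).congr_of_eventuallyEq hloc
  rcases eq_or_ne t 0 with rfl | ht
  · exact hasDerivAt_of_hasDerivAt_of_ne off_zero (by fun_prop) (by fun_prop)
  · exact off_zero t ht

theorem norm_le_of_hasFDerivAt_of_le_add_mul_norm {E : Type*} [NormedAddCommGroup E]
    [NormedSpace ℝ E] {f : E → ℝ} {L : E →L[ℝ] ℝ} {y : E} {C : ℝ} (hC : 0 ≤ C)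
    (hf : HasFDerivAt f L y) (hmin : ∀ᶠ x in 𝓝 y, f y ≤ f x + C * ‖x - y‖) : ‖L‖ ≤ C := by
  refine le_of_forall_pos_le_add fun ε hε => L.opNorm_le_of_nhds_zero (by positivity) ?_
  have hlower : ∀ᶠ x in 𝓝 y, -L (x - y) ≤ (C + ε) * ‖x - y‖ := by
    filter_upwards [hmin, hf.isLittleO.bound hε] with x hx hlo
    rw [Real.norm_eq_abs] at hlo
    linarith [le_abs_self (f x - f y - L (x - y))]
  have hplus : Tendsto (fun v => y + v) (𝓝 0) (𝓝 y) := by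
    simpa using (continuous_const_add y).tendsto 0
  have hminus : Tendsto (fun v => y - v) (𝓝 0) (𝓝 y) := by
    simpa using (continuous_sub_left y).tendsto 0
  filter_upwards [hplus.eventually hlower, hminus.eventually hlower] with v h₁ h₂
  simp only [add_sub_cancel_left, sub_sub_cancel_left, map_neg, neg_neg, norm_neg] at h₁ h₂
  rw [Real.norm_eq_abs, abs_le]
  constructor <;> linarith

theorem eventually_pos_mul_of_tendsto {ι : Type*} {L : Filter ι} {u v : ι → ℝ} {u₀ : ℝ}
    (hu : Tendsto u L (𝓝 u₀)) (huv : ∀ k, u k ≠ 0 → 0 < u k * v k) :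
    ∀ᶠ k in L, u₀ ≠ 0 → 0 < u₀ * v k := by
  rcases eq_or_ne u₀ 0 with rfl | hu₀
  · exact Eventually.of_forall fun k h => (h rfl).elim
  filter_upwards [(hu.const_mul u₀).eventually (lt_mem_nhds (mul_self_pos.2 hu₀))] with k hk _
  have huk : u k ≠ 0 := by rintro h; simp [h] at hk
  have hprod : 0 < (u₀ * v k) * (u k * u k) := by nlinarith [mul_pos hk (huv k huk)]
  exact pos_of_mul_pos_left hprod (mul_self_nonneg _)

theorem ineq_multCond_of_tendsto {ι : Type*} {L : Filter ι} [L.NeBot] {a u : ι → ℝ}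
    {a₀ u₀ : ℝ} (ha : Tendsto a L (𝓝 a₀)) (hu : Tendsto u L (𝓝 u₀)) (ha₀ : a₀ ≤ 0)
    (hsign : ∀ k, 0 ≤ u k ∧ (u k ≠ 0 → 0 < a k)) : 0 ≤ u₀ ∧ (a₀ ≠ 0 → u₀ = 0) := by
  refine ⟨ge_of_tendsto' hu fun k => (hsign k).1, fun ha₀' => ?_⟩
  by_contra hu₀
  have : 0 ≤ a₀ := ge_of_tendsto ha ((hu.eventually_ne hu₀).mono fun k hk => ((hsign k).2 hk).le)
  exact ha₀' (le_antisymm ha₀ this)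

section L1

variable {n : ℕ}

def l1Norm (x : Fin n → ℝ) : ℝ := ∑ i, |x i|

@[simp]
theorem l1Norm_zero : l1Norm (0 : Fin n → ℝ) = 0 := by
  simp [l1Norm]

theorem l1Norm_nonneg (x : Fin n → ℝ) : 0 ≤ l1Norm x := by
  unfold l1Norm; positivity

theorem l1Norm_add_le (x y : Fin n → ℝ) : l1Norm (x + y) ≤ l1Norm x + l1Norm y := by
  simp only [l1Norm, Pi.add_apply, ← Finset.sum_add_distrib]
  exact Finset.sum_le_sum fun i _ => abs_add_le (x i) (y i)

theorem l1Norm_sub_comm (x y : Fin n → ℝ) : l1Norm (x - y) = l1Norm (y - x) := by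
  simp only [l1Norm, Pi.sub_apply, abs_sub_comm]

theorem norm_le_l1Norm (x : Fin n → ℝ) : ‖x‖ ≤ l1Norm x :=
  (pi_norm_le_iff_of_nonneg (l1Norm_nonneg x)).2 fun i =>
    Finset.single_le_sum (f := fun i => |x i|) (fun _ _ => abs_nonneg _) (Finset.mem_univ i)

theorem l1Norm_le_mul_norm (x : Fin n → ℝ) : l1Norm x ≤ n * ‖x‖ := by
  simpa [l1Norm] using Finset.sum_le_sum fun i (_ : i ∈ Finset.univ) => norm_le_pi_norm x i

theorem continuous_l1Norm : Continuous (l1Norm (n := n)) := by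
  unfold l1Norm; fun_prop

theorem l1DistSet_le {x y : Fin n → ℝ} {S : Set (Fin n → ℝ)} (hy : y ∈ S) :
    l1DistSet x S ≤ l1Norm (x - y) :=
  csInf_le ⟨0, by rintro _ ⟨z, _, rfl⟩; positivity⟩ ⟨y, hy, rfl⟩

theorem exists_forall_le_add_mul_l1Norm {F : (Fin n → ℝ) → ℝ} (hF : Continuous F)
    (hF₀ : ∀ x, 0 ≤ F x) {σ : ℝ} (hσ : 0 < σ) (x₀ : Fin n → ℝ) :
    ∃ y, ∀ x, F y + σ * l1Norm (y - x₀) ≤ F x + σ * l1Norm (x - x₀) := by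
  have hcont : Continuous fun x => F x + σ * l1Norm (x - x₀) :=
    hF.add (continuous_const.mul (continuous_l1Norm.comp (continuous_sub_right x₀)))
  refine hcont.exists_forall_le' x₀ ?_
  filter_upwards [(isCompact_closedBall x₀ (F x₀ / σ)).compl_mem_cocompact] with x hx
  rw [Set.mem_compl_iff, Metric.mem_closedBall, not_le, div_lt_iff₀ hσ, dist_eq_norm] at hx
  have hfar := mul_le_mul_of_nonneg_left (norm_le_l1Norm (x - x₀)) hσ.le
  rw [sub_self, l1Norm_zero, mul_zero, add_zero]
  linarith [hF₀ x]

end L1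

theorem l1DistOmega_eq (a b : ℝ) : l1DistOmega (a, b) = max 0 (min a b) + max 0 (-b) := by
  apply le_antisymm
  · -- a nearest point of `Ω`
    set p : ℝ × ℝ := if a ≤ b then (min a 0, max b 0) else (a, 0) with hp_def
    have hp : p ∈ OmegaVC := by
      simp only [hp_def, OmegaVC]
      split_ifs
      · exact ⟨le_max_right b 0, by nlinarith [min_le_right a 0, le_max_right b 0]⟩
      · simp
    calc l1DistOmega (a, b) ≤ |a - p.1| + |b - p.2| :=
          csInf_le ⟨0, by rintro _ ⟨w, _, rfl⟩; positivity⟩ ⟨p, hp, rfl⟩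
      _ ≤ max 0 (min a b) + max 0 (-b) := by
          simp only [hp_def]
          split_ifs <;> rcases le_total a 0 with ha | ha <;> rcases le_total b 0 with hb | hb <;>
            simp [*, abs_of_nonneg, abs_of_nonpos] <;> linarith
  · refine le_csInf ⟨_, (0, 0), by simp [OmegaVC], rfl⟩ ?_
    rintro _ ⟨⟨c, d⟩, ⟨hd, hcd⟩, rfl⟩
    dsimp only at hd hcd ⊢
    rcases le_or_gt c 0 with hc | hc
    · have h₁ : max 0 (min a b) ≤ |a - c| :=
        max_le (abs_nonneg _) (by linarith [min_le_left a b, le_abs_self (a - c)])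
      have h₂ : max 0 (-b) ≤ |b - d| := max_le (abs_nonneg _) (by linarith [neg_abs_le (b - d)])
      linarith
    · obtain rfl : d = 0 := le_antisymm (by nlinarith) hd
      have h₁ : max 0 (min a b) ≤ max 0 b := max_le_max le_rfl (min_le_right a b)
      have h₂ : max 0 b + max 0 (-b) = |b| := by
        rcases le_total b 0 with hb | hb <;> simp [hb, abs_of_nonneg, abs_of_nonpos]
      rw [sub_zero]
      linarith [abs_nonneg (a - c)]

theorem l1DistOmega_nonneg (p : ℝ × ℝ) : 0 ≤ l1DistOmega p := by
  rw [l1DistOmega_eq]; positivity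

/-- The squared Euclidean distance from `(a, b)` to `Ω = {a ≤ 0 ≤ b} ∪ {b = 0}`. -/
def vcSqDist (a b : ℝ) : ℝ := min (max 0 a ^ 2 + max 0 (-b) ^ 2) (b ^ 2)

theorem vcSqDist_nonneg (a b : ℝ) : 0 ≤ vcSqDist a b :=
  le_min (by positivity) (sq_nonneg b)

theorem vcSqDist_le_sq (a b : ℝ) : vcSqDist a b ≤ (max 0 (min a b) + max 0 (-b)) ^ 2 := by
  unfold vcSqDist
  rcases le_total b 0 with hb | hb
  · refine (min_le_right _ _).trans ?_
    nlinarith [le_max_left 0 (min a b), le_max_right 0 (-b)]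
  · rw [max_eq_left (neg_nonpos.2 hb)]
    rcases le_total a b with hab | hab
    · refine (min_le_left _ _).trans ?_
      rw [min_eq_left hab]
      simp
    · refine (min_le_right _ _).trans ?_
      rw [min_eq_right hab, max_eq_right hb]
      simp

theorem vcSqDist_eq_zero {a b : ℝ} (h : vcSqDist a b = 0) : (a, b) ∈ OmegaVC := by
  rcases min_eq_iff.1 h with ⟨h₁, -⟩ | ⟨h₂, -⟩
  · have ha : max 0 a = 0 := by nlinarith [sq_nonneg (max 0 a), sq_nonneg (max 0 (-b))]
    have hb : max 0 (-b) = 0 := by nlinarith [sq_nonneg (max 0 a), sq_nonneg (max 0 (-b))]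
    have ha' : a ≤ 0 := max_eq_left_iff.1 ha
    have hb' : 0 ≤ b := neg_nonpos.1 (max_eq_left_iff.1 hb)
    exact ⟨hb', mul_nonpos_of_nonpos_of_nonneg ha' hb'⟩
  · obtain rfl : b = 0 := pow_eq_zero_iff two_ne_zero |>.1 h₂
    simp [OmegaVC]

noncomputable def vcMult (a b : ℝ) : ℝ × ℝ :=
  if max 0 a ^ 2 + max 0 (-b) ^ 2 ≤ b ^ 2 then (max 0 a, max 0 (-b)) else (0, -b)

/-- The branch of the minimum defining `vcSqDist` that is active at `(a₀, b₀)`; unlike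
`vcSqDist`, it is differentiable. -/
noncomputable def vcMajorant (a₀ b₀ a b : ℝ) : ℝ :=
  if max 0 a₀ ^ 2 + max 0 (-b₀) ^ 2 ≤ b₀ ^ 2 then max 0 a ^ 2 + max 0 (-b) ^ 2 else b ^ 2

theorem vcSqDist_le_vcMajorant (a₀ b₀ a b : ℝ) : vcSqDist a b ≤ vcMajorant a₀ b₀ a b := by
  unfold vcMajorant
  split_ifs
  exacts [min_le_left _ _, min_le_right _ _]

theorem vcMajorant_self (a b : ℝ) : vcMajorant a b a b = vcSqDist a b := by
  unfold vcMajorant vcSqDist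
  split_ifs with h
  exacts [(min_eq_left h).symm, (min_eq_right (le_of_not_ge h)).symm]

theorem vcMult_fst_sq_add_snd_sq (a b : ℝ) :
    (vcMult a b).1 ^ 2 + (vcMult a b).2 ^ 2 = vcSqDist a b := by
  rw [← vcMajorant_self]
  unfold vcMult vcMajorant
  split_ifs <;> simp

theorem hasFDerivAt_vcMajorant {E : Type*} [NormedAddCommGroup E] [NormedSpace ℝ E]
    {u w : E → ℝ} {u' w' : E →L[ℝ] ℝ} {y : E} (hu : HasFDerivAt u u' y)
    (hw : HasFDerivAt w w' y) :
    HasFDerivAt (fun x => vcMajorant (u y) (w y) (u x) (w x))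
      ((2 : ℝ) • ((vcMult (u y) (w y)).1 • u' - (vcMult (u y) (w y)).2 • w')) y := by
  unfold vcMajorant vcMult
  split_ifs
  · have h₁ : HasFDerivAt (fun x => max 0 (u x) ^ 2) ((2 * max 0 (u y)) • u') y :=
      (hasDerivAt_max_zero_sq _).comp_hasFDerivAt y hu
    have h₂ : HasFDerivAt (fun x => max 0 (-w x) ^ 2) ((2 * max 0 (-w y)) • -w') y :=
      (hasDerivAt_max_zero_sq _).comp_hasFDerivAt y hw.neg
    refine (h₁.add h₂).congr_fderiv ?_
    dsimp only
    module
  · refine (hw.pow 2).congr_fderiv ?_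
    dsimp only
    simp only [Nat.add_one_sub_one, pow_one, nsmul_eq_mul, Nat.cast_ofNat, zero_smul, zero_sub,
      smul_neg]
    module

/-- Sign conditions relating the multipliers `(α, β)`, standing for `(η^G_i, η^H_i)`, to the
values `(a, b) = (G_i y, H_i y)`. -/
structure VCSign (a b α β : ℝ) : Prop where
  α_nonneg : 0 ≤ α
  of_α_ne_zero : α ≠ 0 → 0 < a ∧ a ≤ |b|
  of_β_ne_zero : β ≠ 0 → β * b < 0 ∧ b ≤ max 0 a
  β_nonneg_of_nonpos : a ≤ 0 → 0 ≤ β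
  β_mul_α : β * α = 0

theorem vcSign_vcMult (a b : ℝ) : VCSign a b (vcMult a b).1 (vcMult a b).2 := by
  unfold vcMult
  split_ifs with h
  · have hα : max 0 a ≠ 0 → 0 < a := fun hα => by
      by_contra! ha; exact hα (max_eq_left ha)
    have hβ : max 0 (-b) ≠ 0 → b < 0 := fun hβ => by
      by_contra! hb; exact hβ (max_eq_left (neg_nonpos.2 hb))
    refine ⟨le_max_left _ _, fun hne => ?_, fun hne => ?_, fun _ => le_max_left _ _, ?_⟩
    · have ha := hα hne
      rw [max_eq_right ha.le] at h
      exact ⟨ha, (le_abs_self a).trans (sq_le_sq.1 (by nlinarith))⟩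
    · have hb := hβ hne
      rw [max_eq_right (neg_nonneg.2 hb.le)]
      exact ⟨by nlinarith, hb.le.trans (le_max_left _ _)⟩
    · by_cases hne : max 0 (-b) = 0
      · rw [hne, zero_mul]
      · have hb := hβ hne
        rw [max_eq_right (neg_nonneg.2 hb.le)] at h
        have : max 0 a = 0 := by nlinarith [sq_nonneg (max 0 a), le_max_left 0 a]
        rw [this, mul_zero]
  · rw [not_le] at h
    refine ⟨le_rfl, fun hα => (hα rfl).elim, fun hβ => ⟨?_, ?_⟩, fun ha => ?_, by simp⟩
    · have : b ≠ 0 := by simpa using hβ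
      nlinarith [sq_pos_of_ne_zero this]
    · by_contra! hab
      have hb : 0 < b := (le_max_left 0 a).trans_lt hab
      rw [max_eq_left (by linarith : -b ≤ 0)] at h
      nlinarith [le_max_left 0 a]
    · by_contra! hb
      rw [max_eq_left ha, max_eq_left (by linarith : -b ≤ 0)] at h
      nlinarith

theorem VCSign.smul {a b α β t : ℝ} (h : VCSign a b α β) (ht : 0 < t) :
    VCSign a b (t * α) (t * β) where
  α_nonneg := mul_nonneg ht.le h.α_nonneg
  of_α_ne_zero hα := h.of_α_ne_zero (right_ne_zero_of_mul hα)
  of_β_ne_zero hβ := by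
    obtain ⟨h₁, h₂⟩ := h.of_β_ne_zero (right_ne_zero_of_mul hβ)
    exact ⟨by rw [mul_assoc]; exact mul_neg_of_pos_of_neg ht h₁, h₂⟩
  β_nonneg_of_nonpos ha := mul_nonneg ht.le (h.β_nonneg_of_nonpos ha)
  β_mul_α := by rw [mul_mul_mul_comm, h.β_mul_α, mul_zero]

theorem VCSign.multCond_of_tendsto {ι : Type*} {L : Filter ι} [L.NeBot] {a b α β : ι → ℝ}
    {a₀ b₀ α₀ β₀ : ℝ} (ha : Tendsto a L (𝓝 a₀)) (hb : Tendsto b L (𝓝 b₀))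
    (hα : Tendsto α L (𝓝 α₀)) (hβ : Tendsto β L (𝓝 β₀)) (hb₀ : 0 ≤ b₀) (hab₀ : a₀ * b₀ ≤ 0)
    (hs : ∀ k, VCSign (a k) (b k) (α k) (β k)) :
    ((0 < b₀ ∧ a₀ < 0) ∨ (b₀ = 0 ∧ a₀ < 0) ∨ (b₀ = 0 ∧ 0 < a₀) → α₀ = 0) ∧ 0 ≤ α₀ ∧
      (0 < b₀ → β₀ = 0) ∧ (b₀ = 0 ∧ a₀ < 0 → 0 ≤ β₀) ∧ β₀ * α₀ = 0 := by
  refine ⟨fun hcase => ?_, ge_of_tendsto' hα fun k => (hs k).α_nonneg, fun hb₀' => ?_,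
    fun ⟨_, ha₀⟩ => ?_, ?_⟩
  · by_contra hα₀
    have hev := (hα.eventually_ne hα₀).mono fun k hk => (hs k).of_α_ne_zero hk
    have h₁ : 0 ≤ a₀ := ge_of_tendsto ha (hev.mono fun k hk => hk.1.le)
    have h₂ : a₀ ≤ |b₀| := le_of_tendsto_of_tendsto ha hb.abs (hev.mono fun k hk => hk.2)
    rcases hcase with ⟨-, ha₀⟩ | ⟨-, ha₀⟩ | ⟨rfl, ha₀⟩
    · linarith
    · linarith
    · rw [abs_zero] at h₂
      linarith
  · by_contra hβ₀
    have hle : b₀ ≤ max 0 a₀ := le_of_tendsto_of_tendsto hb (tendsto_const_nhds.max ha)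
      ((hβ.eventually_ne hβ₀).mono fun k hk => ((hs k).of_β_ne_zero hk).2)
    have ha₀ : a₀ ≤ 0 := by nlinarith
    rw [max_eq_left ha₀] at hle
    linarith
  · exact ge_of_tendsto hβ ((ha.eventually_lt_const ha₀).mono fun k hk =>
      (hs k).β_nonneg_of_nonpos hk.le)
  · exact tendsto_nhds_unique (hβ.mul hα)
      (tendsto_const_nhds.congr fun k => ((hs k).β_mul_α).symm)

/-- Multipliers `(λ, μ, η^G, η^H)`. -/
abbrev MultVec (m l q : ℕ) := (Fin m → ℝ) × (Fin l → ℝ) × (Fin q → ℝ) × (Fin q → ℝ)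

def multSqNorm {m l q : ℕ} (v : MultVec m l q) : ℝ :=
  (∑ i, v.1 i ^ 2) + (∑ j, v.2.1 j ^ 2) + (∑ i, v.2.2.1 i ^ 2) + ∑ i, v.2.2.2 i ^ 2

theorem multSqNorm_smul {m l q : ℕ} (t : ℝ) (v : MultVec m l q) :
    multSqNorm (t • v) = t ^ 2 * multSqNorm v := by
  simp only [multSqNorm, Prod.smul_fst, Prod.smul_snd, Pi.smul_apply, smul_eq_mul, mul_pow,
    ← Finset.mul_sum]
  ring

theorem norm_le_sqrt_sum_sq {ι : Type*} [Fintype ι] (f : ι → ℝ) : ‖f‖ ≤ √(∑ i, f i ^ 2) :=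
  (pi_norm_le_iff_of_nonneg (Real.sqrt_nonneg _)).2 fun i => Real.abs_le_sqrt <|
    Finset.single_le_sum (f := fun i => f i ^ 2) (fun _ _ => sq_nonneg _) (Finset.mem_univ i)

theorem isCompact_multSqNorm_eq_one {m l q : ℕ} :
    IsCompact {v : MultVec m l q | multSqNorm v = 1} := by
  refine Metric.isCompact_of_isClosed_isBounded
    (isClosed_eq (by unfold multSqNorm; fun_prop) continuous_const)
    ((Metric.isBounded_closedBall (x := 0) (r := 1)).subset fun v hv => ?_)
  have hle : ∀ {ι : Type} [Fintype ι] (f : ι → ℝ), ∑ i, f i ^ 2 ≤ 1 → ‖f‖ ≤ 1 := fun f hf =>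
    (norm_le_sqrt_sum_sq f).trans (Real.sqrt_le_one.2 hf)
  have h₁ := Finset.sum_nonneg fun i (_ : i ∈ Finset.univ) => sq_nonneg (v.1 i)
  have h₂ := Finset.sum_nonneg fun i (_ : i ∈ Finset.univ) => sq_nonneg (v.2.1 i)
  have h₃ := Finset.sum_nonneg fun i (_ : i ∈ Finset.univ) => sq_nonneg (v.2.2.1 i)
  have h₄ := Finset.sum_nonneg fun i (_ : i ∈ Finset.univ) => sq_nonneg (v.2.2.2 i)
  replace hv : multSqNorm v = 1 := hv
  unfold multSqNorm at hv
  simp only [mem_closedBall_zero_iff, norm_prod_le_iff]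
  exact ⟨hle _ (by linarith), hle _ (by linarith), hle _ (by linarith), hle _ (by linarith)⟩

section Problem

variable {n m l q : ℕ} (g : Fin m → (Fin n → ℝ) → ℝ) (h : Fin l → (Fin n → ℝ) → ℝ)
  (G H : Fin q → (Fin n → ℝ) → ℝ)

noncomputable def lagrangianFDeriv (y : Fin n → ℝ) (v : MultVec m l q) : (Fin n → ℝ) →L[ℝ] ℝ :=
  (∑ i, v.1 i • fderiv ℝ (g i) y) + (∑ j, v.2.1 j • fderiv ℝ (h j) y)
    + (∑ i, v.2.2.1 i • fderiv ℝ (G i) y) - (∑ i, v.2.2.2 i • fderiv ℝ (H i) y)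

theorem lagrangianFDeriv_smul (y : Fin n → ℝ) (t : ℝ) (v : MultVec m l q) :
    lagrangianFDeriv g h G H y (t • v) = t • lagrangianFDeriv g h G H y v := by
  simp only [lagrangianFDeriv, Prod.smul_fst, Prod.smul_snd, Pi.smul_apply, smul_eq_mul,
    mul_smul, ← Finset.smul_sum, smul_add, smul_sub]

theorem tendsto_lagrangianFDeriv (hg : ∀ i, ContDiff ℝ 1 (g i)) (hh : ∀ j, ContDiff ℝ 1 (h j))
    (hG : ∀ i, ContDiff ℝ 1 (G i)) (hH : ∀ i, ContDiff ℝ 1 (H i)) {ι : Type*} {L : Filter ι}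
    {y : ι → Fin n → ℝ} {v : ι → MultVec m l q} {y₀ : Fin n → ℝ} {v₀ : MultVec m l q}
    (hy : Tendsto y L (𝓝 y₀)) (hv : Tendsto v L (𝓝 v₀)) :
    Tendsto (fun k => lagrangianFDeriv g h G H (y k) (v k)) L
      (𝓝 (lagrangianFDeriv g h G H y₀ v₀)) := by
  have hD : ∀ f : (Fin n → ℝ) → ℝ, ContDiff ℝ 1 f →
      Tendsto (fun k => fderiv ℝ f (y k)) L (𝓝 (fderiv ℝ f y₀)) := fun f hf =>
    ((hf.continuous_fderiv one_ne_zero).tendsto y₀).comp hy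
  have hv₁ := tendsto_pi_nhds.1 hv.fst_nhds
  have hv₂ := tendsto_pi_nhds.1 hv.snd_nhds.fst_nhds
  have hv₃ := tendsto_pi_nhds.1 hv.snd_nhds.snd_nhds.fst_nhds
  have hv₄ := tendsto_pi_nhds.1 hv.snd_nhds.snd_nhds.snd_nhds
  exact (((tendsto_finsetSum _ fun i _ => (hv₁ i).smul (hD _ (hg i))).add
    (tendsto_finsetSum _ fun j _ => (hv₂ j).smul (hD _ (hh j)))).add
    (tendsto_finsetSum _ fun i _ => (hv₃ i).smul (hD _ (hG i)))).sub
    (tendsto_finsetSum _ fun i _ => (hv₄ i).smul (hD _ (hH i)))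

noncomputable def residual (x : Fin n → ℝ) : ℝ :=
  (∑ j, |h j x|) + (∑ i, max 0 (g i x)) + ∑ i, l1DistOmega (G i x, H i x)

def sqResidual (x : Fin n → ℝ) : ℝ :=
  (∑ i, max 0 (g i x) ^ 2) + (∑ j, h j x ^ 2) + ∑ i, vcSqDist (G i x) (H i x)

theorem sqResidual_nonneg (x : Fin n → ℝ) : 0 ≤ sqResidual g h G H x := by
  unfold sqResidual
  have := Finset.sum_nonneg fun i (_ : i ∈ Finset.univ) => vcSqDist_nonneg (G i x) (H i x)
  positivity

theorem residual_nonneg (x : Fin n → ℝ) : 0 ≤ residual g h G H x := by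
  unfold residual
  have := Finset.sum_nonneg fun i (_ : i ∈ Finset.univ) => l1DistOmega_nonneg (G i x, H i x)
  positivity

theorem sqResidual_le_sq_residual (x : Fin n → ℝ) :
    sqResidual g h G H x ≤ residual g h G H x ^ 2 := by
  have hΩ : ∀ i, 0 ≤ l1DistOmega (G i x, H i x) := fun i => l1DistOmega_nonneg _
  have h₁ := Finset.sum_sq_le_sq_sum_of_nonneg (s := Finset.univ) fun i _ => le_max_left 0 (g i x)
  have h₂ := Finset.sum_sq_le_sq_sum_of_nonneg (s := Finset.univ) fun j _ => abs_nonneg (h j x)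
  have h₃ := Finset.sum_sq_le_sq_sum_of_nonneg (s := Finset.univ) fun i _ => hΩ i
  have h₃' : ∑ i, vcSqDist (G i x) (H i x) ≤ ∑ i, l1DistOmega (G i x, H i x) ^ 2 :=
    Finset.sum_le_sum fun i _ => by rw [l1DistOmega_eq]; exact vcSqDist_le_sq _ _
  simp only [sq_abs] at h₂
  have hA := Finset.sum_nonneg fun j (_ : j ∈ Finset.univ) => abs_nonneg (h j x)
  have hB := Finset.sum_nonneg fun i (_ : i ∈ Finset.univ) => le_max_left 0 (g i x)
  have hC := Finset.sum_nonneg fun i (_ : i ∈ Finset.univ) => hΩ i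
  unfold sqResidual residual
  nlinarith

theorem mem_feasSet_of_sqResidual_eq_zero {x : Fin n → ℝ} (hx : sqResidual g h G H x = 0) :
    x ∈ feasSet g h G H := by
  have h₁ := Finset.sum_nonneg fun i (_ : i ∈ Finset.univ) => sq_nonneg (max 0 (g i x))
  have h₂ := Finset.sum_nonneg fun j (_ : j ∈ Finset.univ) => sq_nonneg (h j x)
  have h₃ := Finset.sum_nonneg fun i (_ : i ∈ Finset.univ) => vcSqDist_nonneg (G i x) (H i x)
  unfold sqResidual at hx
  have hg := (Finset.sum_eq_zero_iff_of_nonneg fun i _ => sq_nonneg (max 0 (g i x))).1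
    (by linarith)
  have hh := (Finset.sum_eq_zero_iff_of_nonneg fun j _ => sq_nonneg (h j x)).1 (by linarith)
  have hGH := (Finset.sum_eq_zero_iff_of_nonneg fun i _ => vcSqDist_nonneg (G i x) (H i x)).1
    (by linarith)
  refine ⟨fun i => ?_, fun j => pow_eq_zero_iff two_ne_zero |>.1 (hh j (Finset.mem_univ j)),
    fun i => (vcSqDist_eq_zero (hGH i (Finset.mem_univ i))).1,
    fun i => (vcSqDist_eq_zero (hGH i (Finset.mem_univ i))).2⟩
  exact max_eq_left_iff.1 (pow_eq_zero_iff two_ne_zero |>.1 (hg i (Finset.mem_univ i)))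

theorem continuous_sqResidual (hg : ∀ i, Continuous (g i)) (hh : ∀ j, Continuous (h j))
    (hG : ∀ i, Continuous (G i)) (hH : ∀ i, Continuous (H i)) :
    Continuous (sqResidual g h G H) := by
  unfold sqResidual vcSqDist
  fun_prop

noncomputable def sqResidualMajorant (y x : Fin n → ℝ) : ℝ :=
  (∑ i, max 0 (g i x) ^ 2) + (∑ j, h j x ^ 2) + ∑ i, vcMajorant (G i y) (H i y) (G i x) (H i x)

theorem sqResidual_le_sqResidualMajorant (y x : Fin n → ℝ) :
    sqResidual g h G H x ≤ sqResidualMajorant g h G H y x := by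
  unfold sqResidual sqResidualMajorant
  gcongr with i
  exact vcSqDist_le_vcMajorant _ _ _ _

theorem sqResidualMajorant_self (y : Fin n → ℝ) :
    sqResidualMajorant g h G H y y = sqResidual g h G H y := by
  simp only [sqResidualMajorant, sqResidual, vcMajorant_self]

noncomputable def residualMult (y : Fin n → ℝ) : MultVec m l q :=
  (fun i => max 0 (g i y), fun j => h j y, fun i => (vcMult (G i y) (H i y)).1,
    fun i => (vcMult (G i y) (H i y)).2)

theorem multSqNorm_residualMult (y : Fin n → ℝ) :
    multSqNorm (residualMult g h G H y) = sqResidual g h G H y := by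
  simp only [multSqNorm, residualMult, sqResidual, add_assoc, ← Finset.sum_add_distrib,
    vcMult_fst_sq_add_snd_sq]

theorem hasFDerivAt_sqResidualMajorant {y : Fin n → ℝ}
    (hg : ∀ i, DifferentiableAt ℝ (g i) y) (hh : ∀ j, DifferentiableAt ℝ (h j) y)
    (hG : ∀ i, DifferentiableAt ℝ (G i) y) (hH : ∀ i, DifferentiableAt ℝ (H i) y) :
    HasFDerivAt (sqResidualMajorant g h G H y)
      ((2 : ℝ) • lagrangianFDeriv g h G H y (residualMult g h G H y)) y := by
  have h₁ := HasFDerivAt.fun_sum (u := Finset.univ) fun i _ =>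
    (hasDerivAt_max_zero_sq (g i y)).comp_hasFDerivAt y (hg i).hasFDerivAt
  have h₂ := HasFDerivAt.fun_sum (u := Finset.univ) fun j _ => ((hh j).hasFDerivAt).pow 2
  have h₃ := HasFDerivAt.fun_sum (u := Finset.univ) fun i _ =>
    hasFDerivAt_vcMajorant (hG i).hasFDerivAt (hH i).hasFDerivAt
  refine ((h₁.add h₂).add h₃).congr_fderiv ?_
  simp only [lagrangianFDeriv, residualMult, smul_add, smul_sub, Finset.smul_sum, smul_smul,
    Finset.sum_sub_distrib, nsmul_eq_mul, Nat.cast_ofNat, pow_one, Nat.add_one_sub_one]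
  abel

/-- Sign conditions on multipliers at a point `y` which, as `y → x*`, turn into conditions (ii)
and (iii). -/
structure SignCond (y : Fin n → ℝ) (v : MultVec m l q) : Prop where
  ineq : ∀ i, 0 ≤ v.1 i ∧ (v.1 i ≠ 0 → 0 < g i y)
  eq : ∀ j, v.2.1 j ≠ 0 → 0 < v.2.1 j * h j y
  vc : ∀ i, VCSign (G i y) (H i y) (v.2.2.1 i) (v.2.2.2 i)

theorem signCond_residualMult (y : Fin n → ℝ) :
    SignCond g h G H y (residualMult g h G H y) where
  ineq i := ⟨le_max_left _ _, fun hne => by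
    by_contra! hgi; exact hne (max_eq_left hgi)⟩
  eq j hne := mul_self_pos.2 hne
  vc i := vcSign_vcMult _ _

theorem SignCond.smul {y : Fin n → ℝ} {v : MultVec m l q} (hv : SignCond g h G H y v)
    {t : ℝ} (ht : 0 < t) : SignCond g h G H y (t • v) where
  ineq i := ⟨mul_nonneg ht.le (hv.ineq i).1, fun hne => (hv.ineq i).2 (right_ne_zero_of_mul hne)⟩
  eq j hne := by
    simpa only [Prod.smul_fst, Prod.smul_snd, Pi.smul_apply, smul_eq_mul, mul_assoc] using
      mul_pos ht (hv.eq j (right_ne_zero_of_mul hne))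
  vc i := (hv.vc i).smul ht

theorem SignCond.eventually_sign_of_tendsto {ι : Type*} {L : Filter ι} {y : ι → Fin n → ℝ}
    {v : ι → MultVec m l q} {v₀ : MultVec m l q} (hv : Tendsto v L (𝓝 v₀))
    (hsign : ∀ k, SignCond g h G H (y k) (v k)) :
    ∀ᶠ k in L, (∀ i, 0 < v₀.1 i → 0 < v₀.1 i * g i (y k)) ∧
      (∀ j, v₀.2.1 j ≠ 0 → 0 < v₀.2.1 j * h j (y k)) ∧
      (∀ i, v₀.2.2.2 i ≠ 0 → v₀.2.2.2 i * H i (y k) < 0) ∧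
      (∀ i, 0 < v₀.2.2.1 i → 0 < v₀.2.2.1 i * G i (y k)) := by
  refine (eventually_all.2 fun i => ?_).and <| (eventually_all.2 fun j => ?_).and <|
    (eventually_all.2 fun i => ?_).and (eventually_all.2 fun i => ?_)
  · refine (eventually_pos_mul_of_tendsto (tendsto_pi_nhds.1 hv.fst_nhds i) fun k hk => ?_).mono
      fun k hk hpos => hk hpos.ne'
    exact mul_pos (((hsign k).ineq i).1.lt_of_ne' hk) (((hsign k).ineq i).2 hk)
  · exact eventually_pos_mul_of_tendsto (tendsto_pi_nhds.1 hv.snd_nhds.fst_nhds j)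
      fun k => (hsign k).eq j
  · refine (eventually_pos_mul_of_tendsto (v := fun k => -H i (y k))
      (tendsto_pi_nhds.1 hv.snd_nhds.snd_nhds.snd_nhds i) fun k hk => ?_).mono
        fun k hk hne => by linarith [hk hne]
    linarith [((hsign k).vc i |>.of_β_ne_zero hk).1]
  · refine (eventually_pos_mul_of_tendsto (tendsto_pi_nhds.1 hv.snd_nhds.snd_nhds.fst_nhds i)
      fun k hk => ?_).mono fun k hk hpos => hk hpos.ne'
    exact mul_pos (((hsign k).vc i).α_nonneg.lt_of_ne' hk) (((hsign k).vc i).of_α_ne_zero hk).1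

theorem norm_lagrangianFDeriv_residualMult_le {y x₀ : Fin n → ℝ}
    (hg : ∀ i, DifferentiableAt ℝ (g i) y) (hh : ∀ j, DifferentiableAt ℝ (h j) y)
    (hG : ∀ i, DifferentiableAt ℝ (G i) y) (hH : ∀ i, DifferentiableAt ℝ (H i) y) {σ : ℝ}
    (hσ : 0 ≤ σ) (hpos : 0 < sqResidual g h G H y)
    (hmin : ∀ x, √(sqResidual g h G H y) + σ * l1Norm (y - x₀) ≤
      √(sqResidual g h G H x) + σ * l1Norm (x - x₀)) :
    ‖lagrangianFDeriv g h G H y ((√(sqResidual g h G H y))⁻¹ • residualMult g h G H y)‖ ≤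
      n * σ := by
  have hderiv : HasFDerivAt (fun x => √(sqResidualMajorant g h G H y x))
      (lagrangianFDeriv g h G H y ((√(sqResidual g h G H y))⁻¹ • residualMult g h G H y)) y := by
    refine ((hasFDerivAt_sqResidualMajorant g h G H hg hh hG hH).sqrt
      (by rw [sqResidualMajorant_self]; exact hpos.ne')).congr_fderiv ?_
    rw [lagrangianFDeriv_smul, sqResidualMajorant_self, smul_smul]
    congr 1
    field_simp
  refine norm_le_of_hasFDerivAt_of_le_add_mul_norm (by positivity) hderiv
    (Eventually.of_forall fun x => ?_)
  have h₁ : √(sqResidual g h G H x) ≤ √(sqResidualMajorant g h G H y x) :=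
    Real.sqrt_le_sqrt (sqResidual_le_sqResidualMajorant g h G H y x)
  have h₂ : σ * l1Norm (x - x₀) ≤ σ * l1Norm (x - y) + σ * l1Norm (y - x₀) := by
    rw [← mul_add]
    exact mul_le_mul_of_nonneg_left (by simpa using l1Norm_add_le (x - y) (y - x₀)) hσ
  have h₃ : σ * l1Norm (x - y) ≤ n * σ * ‖x - y‖ := by
    rw [mul_comm (n : ℝ), mul_assoc]
    exact mul_le_mul_of_nonneg_left (l1Norm_le_mul_norm _) hσ
  rw [sqResidualMajorant_self]
  linarith [hmin x]

theorem exists_approxKKT_of_mul_residual_lt (hg : ∀ i, ContDiff ℝ 1 (g i))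
    (hh : ∀ j, ContDiff ℝ 1 (h j)) (hG : ∀ i, ContDiff ℝ 1 (G i)) (hH : ∀ i, ContDiff ℝ 1 (H i))
    {x₀ : Fin n → ℝ} {c : ℝ} (hc : 0 < c)
    (hfar : c * residual g h G H x₀ < l1DistSet x₀ (feasSet g h G H)) :
    ∃ y v, l1Norm (y - x₀) < l1DistSet x₀ (feasSet g h G H) ∧ multSqNorm v = 1 ∧
      ‖lagrangianFDeriv g h G H y v‖ ≤ n / c ∧ SignCond g h G H y v := by
  obtain ⟨y, hy⟩ := exists_forall_le_add_mul_l1Norm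
    (continuous_sqResidual g h G H (fun i => (hg i).continuous) (fun j => (hh j).continuous)
      (fun i => (hG i).continuous) (fun i => (hH i).continuous)).sqrt
    (fun _ => Real.sqrt_nonneg _) (inv_pos.2 hc) x₀
  have hnear : l1Norm (y - x₀) < l1DistSet x₀ (feasSet g h G H) := by
    have hmin := hy x₀
    rw [sub_self, l1Norm_zero, mul_zero, add_zero] at hmin
    have hres : √(sqResidual g h G H x₀) ≤ residual g h G H x₀ :=
      Real.sqrt_le_iff.2 ⟨residual_nonneg g h G H x₀, sqResidual_le_sq_residual g h G H x₀⟩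
    have : c⁻¹ * l1Norm (y - x₀) ≤ residual g h G H x₀ := by
      linarith [Real.sqrt_nonneg (sqResidual g h G H y)]
    rw [inv_mul_le_iff₀ hc] at this
    linarith
  have hpos : 0 < sqResidual g h G H y := by
    refine (sqResidual_nonneg g h G H y).lt_of_ne fun h0 => ?_
    have := l1DistSet_le (x := x₀) (mem_feasSet_of_sqResidual_eq_zero g h G H h0.symm)
    rw [l1Norm_sub_comm] at this
    linarith
  refine ⟨y, (√(sqResidual g h G H y))⁻¹ • residualMult g h G H y, hnear, ?_, ?_,
    (signCond_residualMult g h G H y).smul g h G H (by positivity)⟩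
  · rw [multSqNorm_smul, multSqNorm_residualMult, inv_pow, Real.sq_sqrt hpos.le,
      inv_mul_cancel₀ hpos.ne']
  · rw [div_eq_mul_inv]
    exact norm_lagrangianFDeriv_residualMult_le g h G H
      (fun i => (hg i).differentiable one_ne_zero y) (fun j => (hh j).differentiable one_ne_zero y)
      (fun i => (hG i).differentiable one_ne_zero y) (fun i => (hH i).differentiable one_ne_zero y)
      (inv_nonneg.2 hc.le) hpos hy

theorem not_genQuasinormal_of_tendsto (hg : ∀ i, ContDiff ℝ 1 (g i))
    (hh : ∀ j, ContDiff ℝ 1 (h j)) (hG : ∀ i, ContDiff ℝ 1 (G i)) (hH : ∀ i, ContDiff ℝ 1 (H i))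
    {xs : Fin n → ℝ} (hxs : xs ∈ feasSet g h G H) {y : ℕ → Fin n → ℝ} {v : ℕ → MultVec m l q}
    {v₀ : MultVec m l q} (hy : Tendsto y atTop (𝓝 xs)) (hv : Tendsto v atTop (𝓝 v₀))
    (hv₀ : v₀ ≠ 0)
    (hlagr : Tendsto (fun k => lagrangianFDeriv g h G H (y k) (v k)) atTop (𝓝 0))
    (hsign : ∀ k, SignCond g h G H (y k) (v k)) : ¬ GenQuasinormal g h G H xs := by
  obtain ⟨hgxs, -, hHxs, hGHxs⟩ := hxs
  have hval : ∀ f : (Fin n → ℝ) → ℝ, ContDiff ℝ 1 f →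
      Tendsto (fun k => f (y k)) atTop (𝓝 (f xs)) := fun f hf => (hf.continuous.tendsto xs).comp hy
  have hv₁ := tendsto_pi_nhds.1 hv.fst_nhds
  have hv₃ := tendsto_pi_nhds.1 hv.snd_nhds.snd_nhds.fst_nhds
  have hv₄ := tendsto_pi_nhds.1 hv.snd_nhds.snd_nhds.snd_nhds
  have hineq i := ineq_multCond_of_tendsto (hval _ (hg i)) (hv₁ i) (hgxs i)
    fun k => (hsign k).ineq i
  have hvc i := VCSign.multCond_of_tendsto (hval _ (hG i)) (hval _ (hH i)) (hv₃ i) (hv₄ i)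
    (hHxs i) (hGHxs i) fun k => (hsign k).vc i
  intro hq
  refine hq ⟨v₀.1, v₀.2.1, v₀.2.2.1, v₀.2.2.2, ?_,
    ⟨tendsto_nhds_unique (tendsto_lagrangianFDeriv g h G H hg hh hG hH hy hv) hlagr,
      fun i _ => (hineq i).1, fun i => (hineq i).2, fun i => (hvc i).1, fun i _ => (hvc i).2.1,
      fun i => (hvc i).2.2.1, fun i => (hvc i).2.2.2.1, fun i _ => (hvc i).2.2.2.2⟩, ?_⟩
  · by_contra! h0
    exact hv₀ (Prod.ext h0.1 (Prod.ext h0.2.1 (Prod.ext h0.2.2.1 h0.2.2.2)))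
  · obtain ⟨J, hJ⟩ :=
      eventually_atTop.1 (SignCond.eventually_sign_of_tendsto g h G H hv hsign)
    exact ⟨fun k => y (k + J), hy.comp (tendsto_add_atTop_nat J),
      fun k => hJ _ (Nat.le_add_left J k)⟩

theorem not_genQuasinormal_of_multSqNorm_eq_one (hg : ∀ i, ContDiff ℝ 1 (g i))
    (hh : ∀ j, ContDiff ℝ 1 (h j)) (hG : ∀ i, ContDiff ℝ 1 (G i)) (hH : ∀ i, ContDiff ℝ 1 (H i))
    {xs : Fin n → ℝ} (hxs : xs ∈ feasSet g h G H) {y : ℕ → Fin n → ℝ} {v : ℕ → MultVec m l q}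
    (hy : Tendsto y atTop (𝓝 xs)) (hnorm : ∀ k, multSqNorm (v k) = 1)
    (hlagr : Tendsto (fun k => lagrangianFDeriv g h G H (y k) (v k)) atTop (𝓝 0))
    (hsign : ∀ k, SignCond g h G H (y k) (v k)) : ¬ GenQuasinormal g h G H xs := by
  obtain ⟨v₀, hv₀, φ, hφ, hvφ⟩ := isCompact_multSqNorm_eq_one.tendsto_subseq hnorm
  refine not_genQuasinormal_of_tendsto g h G H hg hh hG hH hxs (hy.comp hφ.tendsto_atTop) hvφ
    ?_ (hlagr.comp hφ.tendsto_atTop) fun k => hsign (φ k)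
  rintro rfl
  simp [multSqNorm] at hv₀

end Problem

end MPVC

open MPVC

/-- MPVC-generalized quasinormality at a feasible point `xs` implies a
local error bound in the ℓ¹-norm: there are `δ, c > 0` with
`dist₁(x, C) ≤ c (Σ|h_j(x)| + Σ max{0,g_i(x)} + Σ dist₁((G_i(x),H_i(x)), Ω))`
for all `x` with `‖x - xs‖₁ < δ/2`. -/
theorem local_error_bound_of_genQuasinormal {n m l q : ℕ}
    (g : Fin m → (Fin n → ℝ) → ℝ) (h : Fin l → (Fin n → ℝ) → ℝ)
    (G H : Fin q → (Fin n → ℝ) → ℝ)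
    (hg : ∀ i, ContDiff ℝ 1 (g i)) (hh : ∀ j, ContDiff ℝ 1 (h j))
    (hG : ∀ i, ContDiff ℝ 1 (G i)) (hH : ∀ i, ContDiff ℝ 1 (H i))
    (xs : Fin n → ℝ) (hxs : xs ∈ feasSet g h G H)
    (hquasi : GenQuasinormal g h G H xs) :
    ∃ δ c : ℝ, 0 < δ ∧ 0 < c ∧
      ∀ x : Fin n → ℝ, (∑ i, |x i - xs i|) < δ / 2 →
        l1DistSet x (feasSet g h G H) ≤
          c * ((∑ j, |h j x|) + (∑ i, max 0 (g i x)) + ∑ i, l1DistOmega (G i x, H i x)) := by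
  by_contra! hbound
  choose x hx_near hx_far using fun k : ℕ =>
    hbound (1 / (k + 1)) (k + 1) (by positivity) (by positivity)
  choose y v hy_near hnorm hlagr hsign using fun k =>
    exists_approxKKT_of_mul_residual_lt g h G H hg hh hG hH (by positivity) (hx_far k)
  have hy : Tendsto y atTop (𝓝 xs) := by
    refine tendsto_iff_norm_sub_tendsto_zero.2 (squeeze_zero (fun _ => norm_nonneg _)
      (fun k => ?_) tendsto_one_div_add_atTop_nhds_zero_nat)
    have hx : l1Norm (x k - xs) < 1 / (k + 1) / 2 := hx_near k
    calc ‖y k - xs‖ ≤ l1Norm (y k - xs) := norm_le_l1Norm _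
      _ ≤ l1Norm (y k - x k) + l1Norm (x k - xs) := by
          simpa using l1Norm_add_le (y k - x k) (x k - xs)
      _ ≤ 1 / (k + 1) := by linarith [hy_near k, l1DistSet_le (x := x k) hxs]
  refine not_genQuasinormal_of_multSqNorm_eq_one g h G H hg hh hG hH hxs hy hnorm
    (squeeze_zero_norm hlagr ?_) hsign hquasi
  simpa only [mul_zero, mul_one_div] using
    tendsto_one_div_add_atTop_nhds_zero_nat.const_mul (n : ℝ)
end

section
/- Let x* be feasible for the MPVC, let F(x) = (g_1(x),…,g_m(x), h_1(x),…,h_l(x), (G_1(x),H_1(x)),…,(G_q(x),H_q(x))) and Δ = (−∞,0]^m × {0}^l × Ω^q. Then the following are equivalent: (a) the only vector λ in the limiting normal cone N_Δ(F(x*)) with DF(x*)ᵀλ = 0 is λ = 0 (the GMFCQ of Definition 3.7 of Hoheisel–Kanzow–Outrata); (b) MPVC-GMFCQ holds at x*, i.e., the only multiplier (λ, μ, η^G, η^H) satisfying conditions (i)–(ii) at x* is the zero multiplier. -/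
open Filter Topology

/-- The Bouligand (contingent) tangent cone of a set `S` at `x`. -/
def tanCone {E : Type*} [NormedAddCommGroup E] [NormedSpace ℝ E] (S : Set E) (x : E) :
    Set E :=
  {d | ∃ (dk : ℕ → E) (tk : ℕ → ℝ), Tendsto dk atTop (𝓝 d) ∧ Tendsto tk atTop (𝓝 0)
      ∧ (∀ k, 0 < tk k) ∧ ∀ k, x + tk k • dk k ∈ S}

/-- The constraint map `F(x) = (g(x), h(x), (G_i(x), H_i(x))_i)`. -/
def FF {n m l q : ℕ} (g : Fin m → (Fin n → ℝ) → ℝ) (h : Fin l → (Fin n → ℝ) → ℝ)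
    (G H : Fin q → (Fin n → ℝ) → ℝ) (x : Fin n → ℝ) :
    (Fin m → ℝ) × (Fin l → ℝ) × (Fin q → ℝ × ℝ) :=
  (fun i => g i x, fun j => h j x, fun i => (G i x, H i x))

/-- The set `Δ = (−∞,0]^m × {0}^l × Ω^q`. -/
def DeltaVC {m l q : ℕ} : Set ((Fin m → ℝ) × (Fin l → ℝ) × (Fin q → ℝ × ℝ)) :=
  {y | (∀ i, y.1 i ≤ 0) ∧ (∀ j, y.2.1 j = 0) ∧ ∀ i, y.2.2 i ∈ OmegaVC}

/-- The Euclidean pairing on `ℝ^m × ℝ^l × (ℝ²)^q`. -/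
def dotY {m l q : ℕ} (v w : (Fin m → ℝ) × (Fin l → ℝ) × (Fin q → ℝ × ℝ)) : ℝ :=
  (∑ i, v.1 i * w.1 i) + (∑ j, v.2.1 j * w.2.1 j)
    + ∑ i, ((v.2.2 i).1 * (w.2.2 i).1 + (v.2.2 i).2 * (w.2.2 i).2)

/-- The Fréchet normal cone (polar of the tangent cone). -/
def frechetNormal {m l q : ℕ} (S : Set ((Fin m → ℝ) × (Fin l → ℝ) × (Fin q → ℝ × ℝ)))
    (y : (Fin m → ℝ) × (Fin l → ℝ) × (Fin q → ℝ × ℝ)) :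
    Set ((Fin m → ℝ) × (Fin l → ℝ) × (Fin q → ℝ × ℝ)) :=
  {v | ∀ d ∈ tanCone S y, dotY v d ≤ 0}

/-- The limiting (Mordukhovich) normal cone. -/
def limitingNormal {m l q : ℕ} (S : Set ((Fin m → ℝ) × (Fin l → ℝ) × (Fin q → ℝ × ℝ)))
    (y : (Fin m → ℝ) × (Fin l → ℝ) × (Fin q → ℝ × ℝ)) :
    Set ((Fin m → ℝ) × (Fin l → ℝ) × (Fin q → ℝ × ℝ)) :=
  {v | ∃ yk vk : ℕ → (Fin m → ℝ) × (Fin l → ℝ) × (Fin q → ℝ × ℝ),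
      Tendsto yk atTop (𝓝 y) ∧ (∀ k, yk k ∈ S) ∧ Tendsto vk atTop (𝓝 v)
      ∧ ∀ k, vk k ∈ frechetNormal S (yk k)}

/-!
Under the identification `(λ, μ, η^G, η^H) ↦ (λ, μ, (η^G_i, -η^H_i)_i)`, the equation
`DF(x*)ᵀ v = 0` is condition (i), so it suffices to show that the limiting normal cone
`N_Δ(F(x*))` is exactly the set cut out by the sign conditions (ii). Both cones of `Δ` split
into factors. The Fréchet normal cone of `Ω` at `p` is computed by testing against segments
`p + t c ⊆ Ω` (one inclusion) and by local polarity `⟨v, z - p⟩ ≤ 0` for `z ∈ Ω` near `p`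
(the other). Passing to limits gives the limiting cone; conversely, a limiting normal at the
corner `(0, 0)` is a Fréchet normal along a ray `t c` into the branch of `Ω` that it selects.
-/

open Set

lemma mem_tanCone_of_eventually {E : Type*} [NormedAddCommGroup E] [NormedSpace ℝ E]
    {S : Set E} {y d : E} (h : ∀ᶠ t : ℝ in 𝓝[>] 0, y + t • d ∈ S) : d ∈ tanCone S y := by
  have ht : Tendsto (fun k : ℕ => 1 / ((k : ℝ) + 1)) atTop (𝓝[>] 0) :=
    tendsto_nhdsWithin_iff.2 ⟨tendsto_one_div_add_atTop_nhds_zero_nat,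
      Eventually.of_forall fun k => by simp only [mem_Ioi]; positivity⟩
  obtain ⟨N, hN⟩ := eventually_atTop.1 (ht.eventually h)
  exact ⟨fun _ => d, fun k => 1 / (((k + N : ℕ) : ℝ) + 1), tendsto_const_nhds,
    (ht.mono_right nhdsWithin_le_nhds).comp (tendsto_add_atTop_nat N), fun k => by positivity,
    fun k => hN _ (Nat.le_add_left N k)⟩

section Omega

/-- Explicit form of the Fréchet normal cone of `Ω`, valid at points of `Ω`. -/
def omegaFrechetCone (p : ℝ × ℝ) : Set (ℝ × ℝ) :=
  {u | 0 ≤ u.1 ∧ (p.1 ≠ 0 → u.1 = 0) ∧ (p.2 = 0 → u.1 = 0) ∧ (0 < p.2 → u.2 = 0)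
    ∧ (p.1 ≤ 0 → u.2 ≤ 0)}

/-- Explicit form of the limiting normal cone of `Ω`, valid at points of `Ω`. -/
def omegaLimitingCone (p : ℝ × ℝ) : Set (ℝ × ℝ) :=
  {u | 0 ≤ u.1 ∧ (p.1 ≠ 0 → u.1 = 0) ∧ (0 < p.2 → u.2 = 0) ∧ (p.1 < 0 → u.2 ≤ 0)
    ∧ u.1 * u.2 = 0}

variable {p u : ℝ × ℝ}

lemma mem_omegaFrechetCone_of_segment (hp : p ∈ OmegaVC)
    (h : ∀ c : ℝ × ℝ, (∀ᶠ t : ℝ in 𝓝[>] 0, p + t • c ∈ OmegaVC) → u.1 * c.1 + u.2 * c.2 ≤ 0) :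
    u ∈ omegaFrechetCone p := by
  obtain ⟨a, b⟩ := p
  obtain ⟨hb, hab⟩ := hp
  have test (c₁ c₂ : ℝ) (t₀ : ℝ) (ht₀ : 0 < t₀)
      (hc : ∀ t, 0 < t → t < t₀ → 0 ≤ b + t * c₂ ∧ (a + t * c₁) * (b + t * c₂) ≤ 0) :
      u.1 * c₁ + u.2 * c₂ ≤ 0 :=
    h (c₁, c₂) <| by
      filter_upwards [Ioo_mem_nhdsGT ht₀] with t ht
      simpa [OmegaVC] using hc t ht.1 ht.2
  simp only at hb hab
  have left : 0 ≤ u.1 := by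
    have := test (-1) 0 1 one_pos fun t ht _ => ⟨by simpa using hb, by nlinarith⟩
    linarith
  have right (hba : b = 0 ∨ a < 0) : u.1 ≤ 0 := by
    rcases hba with rfl | ha
    · linarith [test 1 0 1 one_pos fun t ht _ => ⟨by simp, by simp⟩]
    · linarith [test 1 0 (-a) (by linarith) fun t ht ht' => ⟨by simpa using hb, by nlinarith⟩]
  have up (ha : a ≤ 0) : u.2 ≤ 0 := by
    linarith [test 0 1 1 one_pos fun t ht _ => ⟨by linarith, by nlinarith⟩]
  have down (ha : a ≤ 0) (hb : 0 < b) : 0 ≤ u.2 := by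
    linarith [test 0 (-1) b hb fun t ht ht' => ⟨by linarith, by nlinarith⟩]
  refine ⟨left, fun ha => ?_, fun hb0 => le_antisymm (right (.inl hb0)) left,
    fun hb0 => ?_, up⟩
  · have : b = 0 ∨ a < 0 := by
      rcases ha.lt_or_gt with ha | ha
      · exact .inr ha
      · exact .inl (by nlinarith)
    exact le_antisymm (right this) left
  · have ha : a ≤ 0 := by nlinarith
    exact le_antisymm (up ha) (down ha hb0)

lemma eventually_omegaFrechetCone_polar (hp : p ∈ OmegaVC) (hu : u ∈ omegaFrechetCone p) :
    ∀ᶠ z in 𝓝 p, z ∈ OmegaVC → u.1 * (z.1 - p.1) + u.2 * (z.2 - p.2) ≤ 0 := by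
  obtain ⟨hu₁, hua, hub0, hub, hua'⟩ := hu
  rcases hp.1.lt_or_eq with hb | hb
  · -- near `p` the second coordinate stays positive, so `Ω` is locally `{z.1 ≤ 0}`
    filter_upwards [continuous_snd.tendsto p |>.eventually_const_lt hb] with z hz hzΩ
    have hz₁ : z.1 ≤ 0 := by nlinarith [hzΩ.2]
    rw [hub hb]
    rcases eq_or_ne p.1 0 with ha | ha
    · nlinarith
    · simp [hua ha]
  · rw [hub0 hb.symm]
    rcases le_or_gt p.1 0 with ha | ha
    · exact Eventually.of_forall fun z hz => by nlinarith [hua' ha, hz.1]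
    · filter_upwards [continuous_fst.tendsto p |>.eventually_const_lt ha] with z hz hzΩ
      have : z.2 = 0 := le_antisymm (by nlinarith [hzΩ.2]) hzΩ.1
      simp [this, ← hb]

lemma mul_eq_zero_of_mem_omegaFrechetCone (hp : p ∈ OmegaVC) (hu : u ∈ omegaFrechetCone p) :
    u.1 * u.2 = 0 := by
  rcases hp.1.lt_or_eq with hb | hb
  · simp [hu.2.2.2.1 hb]
  · simp [hu.2.2.1 hb.symm]

lemma mem_omegaLimitingCone_of_tendsto {pk uk : ℕ → ℝ × ℝ} (hpk : Tendsto pk atTop (𝓝 p))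
    (huk : Tendsto uk atTop (𝓝 u)) (hpkΩ : ∀ k, pk k ∈ OmegaVC)
    (hukN : ∀ k, uk k ∈ omegaFrechetCone (pk k)) : u ∈ omegaLimitingCone p := by
  have eq_zero {f : ℕ → ℝ} {a : ℝ} (hf : Tendsto f atTop (𝓝 a)) (h : ∀ᶠ k in atTop, f k = 0) :
      a = 0 := tendsto_nhds_unique_of_eventuallyEq hf tendsto_const_nhds h
  refine ⟨ge_of_tendsto' huk.fst_nhds fun k => (hukN k).1, fun ha => ?_, fun hb => ?_,
    fun ha => ?_, ?_⟩
  · exact eq_zero huk.fst_nhds <| (hpk.fst_nhds.eventually_ne ha).mono fun k hk => (hukN k).2.1 hk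
  · exact eq_zero huk.snd_nhds <|
      (hpk.snd_nhds.eventually_const_lt hb).mono fun k hk => (hukN k).2.2.2.1 hk
  · exact le_of_tendsto huk.snd_nhds <|
      (hpk.fst_nhds.eventually_lt_const ha).mono fun k hk => (hukN k).2.2.2.2 hk.le
  · exact eq_zero (huk.fst_nhds.mul huk.snd_nhds) <| Eventually.of_forall fun k =>
      mul_eq_zero_of_mem_omegaFrechetCone (hpkΩ k) (hukN k)

lemma exists_ray_omegaFrechetCone (hp : p ∈ OmegaVC) (hu : u ∈ omegaLimitingCone p) :
    ∃ c : ℝ × ℝ, ∀ t : ℝ, 0 < t → p + t • c ∈ OmegaVC ∧ u ∈ omegaFrechetCone (p + t • c) := by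
  obtain ⟨a, b⟩ := p
  obtain ⟨hb, hab⟩ := hp
  obtain ⟨hu₁, hua, hub, hua', hmul⟩ := hu
  simp only at hb hab hua hub hua'
  by_cases h0 : a = 0 ∧ b = 0
  · obtain ⟨rfl, rfl⟩ := h0
    rcases hu₁.lt_or_eq with hu₁ | hu₁
    · have hu₂ : u.2 = 0 := (mul_eq_zero.1 hmul).resolve_left hu₁.ne'
      refine ⟨(0, 1), fun t ht => ⟨⟨by simpa using ht.le, by simp⟩, ?_⟩⟩
      simp [omegaFrechetCone, hu₁.le, hu₂, ht.ne']
    rcases lt_or_ge 0 u.2 with hu₂ | hu₂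
    · refine ⟨(1, 0), fun t ht => ⟨⟨by simp, by simp⟩, ?_⟩⟩
      simp [omegaFrechetCone, ← hu₁, ht.ne', not_le.2 ht]
    · refine ⟨0, fun t ht => ⟨⟨by simp, by simp⟩, ?_⟩⟩
      simp [omegaFrechetCone, ← hu₁, hu₂]
  · refine ⟨0, fun t ht => ⟨by simpa [OmegaVC] using ⟨hb, hab⟩, ?_⟩⟩
    rw [smul_zero, add_zero]
    refine ⟨hu₁, hua, fun hb0 => hua fun ha => h0 ⟨ha, hb0⟩, hub, fun ha => ?_⟩
    rcases ha.lt_or_eq with ha | ha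
    · exact hua' ha
    · exact (hub (hb.lt_of_ne fun hb0 => h0 ⟨ha, hb0.symm⟩)).le

end Omega

section Delta

/-- The normal cone of `(-∞, 0]` at a point `a ≤ 0`. -/
def nonposNormalCone (a : ℝ) : Set ℝ := {u | 0 ≤ u ∧ (a ≠ 0 → u = 0)}

def deltaFrechetCone {m l q : ℕ} (y : (Fin m → ℝ) × (Fin l → ℝ) × (Fin q → ℝ × ℝ)) :
    Set ((Fin m → ℝ) × (Fin l → ℝ) × (Fin q → ℝ × ℝ)) :=
  {v | (∀ i, v.1 i ∈ nonposNormalCone (y.1 i)) ∧ ∀ i, v.2.2 i ∈ omegaFrechetCone (y.2.2 i)}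

def deltaLimitingCone {m l q : ℕ} (y : (Fin m → ℝ) × (Fin l → ℝ) × (Fin q → ℝ × ℝ)) :
    Set ((Fin m → ℝ) × (Fin l → ℝ) × (Fin q → ℝ × ℝ)) :=
  {v | (∀ i, v.1 i ∈ nonposNormalCone (y.1 i)) ∧ ∀ i, v.2.2 i ∈ omegaLimitingCone (y.2.2 i)}

lemma mem_nonposNormalCone_of_segment {a u : ℝ} (ha : a ≤ 0)
    (h : ∀ c : ℝ, (∀ᶠ t : ℝ in 𝓝[>] 0, a + t * c ≤ 0) → u * c ≤ 0) :
    u ∈ nonposNormalCone a := by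
  have hu : 0 ≤ u := by
    linarith [h (-1) (eventually_nhdsWithin_of_forall fun t (ht : 0 < t) => by linarith)]
  refine ⟨hu, fun ha0 => le_antisymm ?_ hu⟩
  have ha : a < 0 := ha.lt_of_ne ha0
  linarith [h 1 <| by filter_upwards [Ioo_mem_nhdsGT (neg_pos.2 ha)] with t ht; linarith [ht.2]]

lemma mem_nonposNormalCone_of_tendsto {ak uk : ℕ → ℝ} {a u : ℝ} (hak : Tendsto ak atTop (𝓝 a))
    (huk : Tendsto uk atTop (𝓝 u)) (hukN : ∀ k, uk k ∈ nonposNormalCone (ak k)) :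
    u ∈ nonposNormalCone a :=
  ⟨ge_of_tendsto' huk fun k => (hukN k).1, fun ha =>
    tendsto_nhds_unique_of_eventuallyEq huk tendsto_const_nhds <|
      (hak.eventually_ne ha).mono fun k hk => (hukN k).2 hk⟩

variable {m l q : ℕ}

lemma continuous_dotY (v : (Fin m → ℝ) × (Fin l → ℝ) × (Fin q → ℝ × ℝ)) :
    Continuous (dotY v) := by
  unfold dotY; fun_prop

lemma dotY_smul_right (v w : (Fin m → ℝ) × (Fin l → ℝ) × (Fin q → ℝ × ℝ)) (t : ℝ) :
    dotY v (t • w) = t * dotY v w := by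
  simp only [dotY, Prod.smul_fst, Prod.smul_snd, Pi.smul_apply, smul_eq_mul, mul_add,
    Finset.mul_sum, mul_left_comm t]

lemma mem_frechetNormal_of_eventually {S : Set ((Fin m → ℝ) × (Fin l → ℝ) × (Fin q → ℝ × ℝ))}
    {y v : (Fin m → ℝ) × (Fin l → ℝ) × (Fin q → ℝ × ℝ)}
    (h : ∀ᶠ z in 𝓝 y, z ∈ S → dotY v (z - y) ≤ 0) : v ∈ frechetNormal S y := by
  rintro d ⟨dk, tk, hdk, htk, htk_pos, hmem⟩
  have hyk : Tendsto (fun k => y + tk k • dk k) atTop (𝓝 y) := by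
    simpa using tendsto_const_nhds.add (htk.smul hdk)
  refine le_of_tendsto ((continuous_dotY v).tendsto d |>.comp hdk) ?_
  filter_upwards [hyk.eventually h] with k hk
  have := hk (hmem k)
  rw [add_sub_cancel_left, dotY_smul_right] at this
  exact nonpos_of_mul_nonpos_right this (htk_pos k)

variable {y v : (Fin m → ℝ) × (Fin l → ℝ) × (Fin q → ℝ × ℝ)}

lemma eventually_dotY_sub_nonpos (hy : y ∈ DeltaVC) (hv : v ∈ deltaFrechetCone y) :
    ∀ᶠ z in 𝓝 y, z ∈ DeltaVC → dotY v (z - y) ≤ 0 := by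
  have hpairs : ∀ᶠ z in 𝓝 y, ∀ i, z.2.2 i ∈ OmegaVC →
      (v.2.2 i).1 * ((z.2.2 i).1 - (y.2.2 i).1) + (v.2.2 i).2 * ((z.2.2 i).2 - (y.2.2 i).2) ≤ 0 :=
    eventually_all.2 fun i =>
      (((continuous_apply i).comp (continuous_snd.comp continuous_snd)).tendsto y).eventually
        (eventually_omegaFrechetCone_polar (hy.2.2 i) (hv.2 i))
  filter_upwards [hpairs] with z hz hzΔ
  refine add_nonpos (add_nonpos (Finset.sum_nonpos fun i _ => ?_) (Finset.sum_nonpos fun j _ => ?_))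
    (Finset.sum_nonpos fun i _ => hz i (hzΔ.2.2 i))
  · obtain ⟨hv₁, hv₀⟩ := hv.1 i
    rcases eq_or_ne (y.1 i) 0 with hyi | hyi
    · simpa [hyi] using mul_nonpos_of_nonneg_of_nonpos hv₁ (hzΔ.1 i)
    · simp [hv₀ hyi]
  · simp [hzΔ.2.1 j, hy.2.1 j]

lemma frechetNormal_DeltaVC (hy : y ∈ DeltaVC) : frechetNormal DeltaVC y = deltaFrechetCone y := by
  ext v
  refine ⟨fun hv => ⟨fun i => ?_, fun i => ?_⟩, fun hv =>
    mem_frechetNormal_of_eventually (eventually_dotY_sub_nonpos hy hv)⟩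
  · refine mem_nonposNormalCone_of_segment (hy.1 i) fun c hc => ?_
    have hd : (Pi.single i c, 0, 0) ∈ tanCone DeltaVC y := by
      refine mem_tanCone_of_eventually ?_
      filter_upwards [hc] with t ht
      refine ⟨fun i' => ?_, fun j => by simpa using hy.2.1 j, fun i' => by simpa using hy.2.2 i'⟩
      rcases eq_or_ne i' i with rfl | hne
      · simpa using ht
      · simpa [hne] using hy.1 i'
    simpa [dotY, Pi.single_apply] using hv _ hd
  · refine mem_omegaFrechetCone_of_segment (hy.2.2 i) fun c hc => ?_
    have hd : (0, 0, Pi.single i c) ∈ tanCone DeltaVC y := by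
      refine mem_tanCone_of_eventually ?_
      filter_upwards [hc] with t ht
      refine ⟨fun i' => by simpa using hy.1 i', fun j => by simpa using hy.2.1 j, fun i' => ?_⟩
      rcases eq_or_ne i' i with rfl | hne
      · simpa using ht
      · simpa [hne] using hy.2.2 i'
    simpa [dotY, Pi.single_apply, apply_ite Prod.fst, apply_ite Prod.snd, mul_ite, ite_add_ite]
      using hv _ hd

lemma limitingNormal_DeltaVC (hy : y ∈ DeltaVC) :
    limitingNormal DeltaVC y = deltaLimitingCone y := by
  ext v
  constructor
  · rintro ⟨yk, vk, hyk, hykΔ, hvk, hvkN⟩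
    simp only [frechetNormal_DeltaVC (hykΔ _)] at hvkN
    exact ⟨fun i => mem_nonposNormalCone_of_tendsto (hyk.fst_nhds.apply_nhds i)
        (hvk.fst_nhds.apply_nhds i) fun k => (hvkN k).1 i,
      fun i => mem_omegaLimitingCone_of_tendsto (hyk.snd_nhds.snd_nhds.apply_nhds i)
        (hvk.snd_nhds.snd_nhds.apply_nhds i) (fun k => (hykΔ k).2.2 i) fun k => (hvkN k).2 i⟩
  · intro hv
    choose c hc using fun i => exists_ray_omegaFrechetCone (hy.2.2 i) (hv.2 i)
    have hray (t : ℝ) (ht : 0 < t) :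
        y + t • (0, 0, c) ∈ DeltaVC ∧ v ∈ deltaFrechetCone (y + t • (0, 0, c)) :=
      ⟨⟨fun i => by simpa using hy.1 i, fun j => by simpa using hy.2.1 j, fun i => (hc i t ht).1⟩,
        fun i => by simpa using hv.1 i, fun i => (hc i t ht).2⟩
    have hyk : Tendsto (fun k : ℕ => y + (1 / ((k : ℝ) + 1)) • (0, 0, c)) atTop (𝓝 y) := by
      have htk : Tendsto (fun k : ℕ => 1 / ((k : ℝ) + 1)) atTop (𝓝 0) :=
        tendsto_one_div_add_atTop_nhds_zero_nat
      simpa using (tendsto_const_nhds (x := y)).add (htk.smul_const (0, 0, c))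
    refine ⟨_, fun _ => v, hyk, fun k => (hray _ (by positivity)).1, tendsto_const_nhds,
      fun k => ?_⟩
    rw [frechetNormal_DeltaVC (hray _ (by positivity)).1]
    exact (hray _ (by positivity)).2

end Delta

section MPVC

variable {n m l q : ℕ}

/-- `η^H` enters with a minus sign, matching the `- ∑ η^H_i ∇H_i` in condition (i). -/
def multVec (lam : Fin m → ℝ) (mu : Fin l → ℝ) (etaG etaH : Fin q → ℝ) :
    (Fin m → ℝ) × (Fin l → ℝ) × (Fin q → ℝ × ℝ) :=
  (lam, mu, fun i => (etaG i, -etaH i))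

lemma multVec_surjective (v : (Fin m → ℝ) × (Fin l → ℝ) × (Fin q → ℝ × ℝ)) :
    ∃ lam mu etaG etaH, multVec lam mu etaG etaH = v :=
  ⟨v.1, v.2.1, fun i => (v.2.2 i).1, fun i => -(v.2.2 i).2, by simp [multVec]⟩

lemma multVec_eq_zero_iff {lam : Fin m → ℝ} {mu : Fin l → ℝ} {etaG etaH : Fin q → ℝ} :
    multVec lam mu etaG etaH = 0 ↔ lam = 0 ∧ mu = 0 ∧ etaG = 0 ∧ etaH = 0 := by
  simp [multVec, Prod.ext_iff, funext_iff, forall_and]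

lemma mem_omegaLimitingCone_iff_mpvc {a b u w : ℝ} (hb : 0 ≤ b) (hab : a * b ≤ 0) :
    (u, -w) ∈ omegaLimitingCone (a, b) ↔
      (((0 < b ∧ a < 0) ∨ (b = 0 ∧ a < 0) ∨ (b = 0 ∧ 0 < a) → u = 0)
        ∧ ((0 < b ∧ a = 0) ∨ (b = 0 ∧ a = 0) → 0 ≤ u)
        ∧ (0 < b → w = 0) ∧ (b = 0 ∧ a < 0 → 0 ≤ w) ∧ (b = 0 ∧ a = 0 → w * u = 0)) := by
  have : ¬(0 < a ∧ 0 < b) := fun h => (mul_pos h.1 h.2).not_ge hab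
  simp only [omegaLimitingCone, mem_ofPred_eq]
  grind

variable (g : Fin m → (Fin n → ℝ) → ℝ) (h : Fin l → (Fin n → ℝ) → ℝ)
  (G H : Fin q → (Fin n → ℝ) → ℝ)

lemma FF_mem_DeltaVC {x : Fin n → ℝ} (hx : x ∈ feasSet g h G H) : FF g h G H x ∈ DeltaVC :=
  ⟨hx.1, hx.2.1, fun i => ⟨hx.2.2.1 i, hx.2.2.2 i⟩⟩

lemma fderiv_FF_apply {x : Fin n → ℝ} (hg : ∀ i, DifferentiableAt ℝ (g i) x)
    (hh : ∀ j, DifferentiableAt ℝ (h j) x) (hG : ∀ i, DifferentiableAt ℝ (G i) x)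
    (hH : ∀ i, DifferentiableAt ℝ (H i) x) (v : Fin n → ℝ) :
    fderiv ℝ (FF g h G H) x v =
      (fun i => fderiv ℝ (g i) x v, fun j => fderiv ℝ (h j) x v,
        fun i => (fderiv ℝ (G i) x v, fderiv ℝ (H i) x v)) := by
  have hF : HasFDerivAt (FF g h G H)
      ((ContinuousLinearMap.pi fun i => fderiv ℝ (g i) x).prod
        ((ContinuousLinearMap.pi fun j => fderiv ℝ (h j) x).prod
          (ContinuousLinearMap.pi fun i => (fderiv ℝ (G i) x).prod (fderiv ℝ (H i) x)))) x :=
    (hasFDerivAt_pi.2 fun i => (hg i).hasFDerivAt).prodMk <|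
      (hasFDerivAt_pi.2 fun j => (hh j).hasFDerivAt).prodMk <|
        hasFDerivAt_pi.2 fun i => (hG i).hasFDerivAt.prodMk (hH i).hasFDerivAt
  rw [hF.fderiv]
  rfl

lemma dotY_multVec_fderiv_FF {x : Fin n → ℝ} (hg : ∀ i, DifferentiableAt ℝ (g i) x)
    (hh : ∀ j, DifferentiableAt ℝ (h j) x) (hG : ∀ i, DifferentiableAt ℝ (G i) x)
    (hH : ∀ i, DifferentiableAt ℝ (H i) x) (lam : Fin m → ℝ) (mu : Fin l → ℝ)
    (etaG etaH : Fin q → ℝ) (v : Fin n → ℝ) :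
    dotY (multVec lam mu etaG etaH) (fderiv ℝ (FF g h G H) x v) =
      ((∑ i, lam i • fderiv ℝ (g i) x) + (∑ j, mu j • fderiv ℝ (h j) x)
        + (∑ i, etaG i • fderiv ℝ (G i) x) - (∑ i, etaH i • fderiv ℝ (H i) x)) v := by
  simp only [dotY, multVec, fderiv_FF_apply g h G H hg hh hG hH, neg_mul,
    Finset.sum_add_distrib, Finset.sum_neg_distrib, sub_apply, add_apply, sum_apply, smul_apply,
    smul_eq_mul]
  ring

lemma forall_dotY_multVec_fderiv_FF_eq_zero_iff {x : Fin n → ℝ}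
    (hg : ∀ i, DifferentiableAt ℝ (g i) x) (hh : ∀ j, DifferentiableAt ℝ (h j) x)
    (hG : ∀ i, DifferentiableAt ℝ (G i) x) (hH : ∀ i, DifferentiableAt ℝ (H i) x)
    (lam : Fin m → ℝ) (mu : Fin l → ℝ) (etaG etaH : Fin q → ℝ) :
    (∀ v, dotY (multVec lam mu etaG etaH) (fderiv ℝ (FF g h G H) x v) = 0) ↔
      (∑ i, lam i • fderiv ℝ (g i) x) + (∑ j, mu j • fderiv ℝ (h j) x)
        + (∑ i, etaG i • fderiv ℝ (G i) x) - (∑ i, etaH i • fderiv ℝ (H i) x) = 0 := by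
  rw [ContinuousLinearMap.ext_iff]
  exact forall_congr' fun v => by rw [dotY_multVec_fderiv_FF g h G H hg hh hG hH]; rfl

lemma multCond_iff {xs : Fin n → ℝ} (hxs : xs ∈ feasSet g h G H)
    (hg : ∀ i, DifferentiableAt ℝ (g i) xs) (hh : ∀ j, DifferentiableAt ℝ (h j) xs)
    (hG : ∀ i, DifferentiableAt ℝ (G i) xs) (hH : ∀ i, DifferentiableAt ℝ (H i) xs)
    {lam : Fin m → ℝ} {mu : Fin l → ℝ} {etaG etaH : Fin q → ℝ} :
    MultCond g h G H xs lam mu etaG etaH ↔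
      (∀ v, dotY (multVec lam mu etaG etaH) (fderiv ℝ (FF g h G H) xs v) = 0)
        ∧ multVec lam mu etaG etaH ∈ deltaLimitingCone (FF g h G H xs) := by
  have hpairs (i : Fin q) := mem_omegaLimitingCone_iff_mpvc (u := etaG i) (w := etaH i)
    (hxs.2.2.1 i) (hxs.2.2.2 i)
  rw [MultCond, ← forall_dotY_multVec_fderiv_FF_eq_zero_iff g h G H hg hh hG hH]
  simp only [deltaLimitingCone, multVec, FF, nonposNormalCone, mem_ofPred_eq, hpairs,
    forall_and]
  constructor
  · rintro ⟨heq, hlam₀, hlam, hrest⟩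
    exact ⟨heq, ⟨fun i => (eq_or_ne (g i xs) 0).elim (hlam₀ i) fun hi => (hlam i hi).ge, hlam⟩,
      hrest⟩
  · rintro ⟨heq, ⟨hlam₀, hlam⟩, hrest⟩
    exact ⟨heq, fun i _ => hlam₀ i, hlam, hrest⟩

end MPVC

/-- At a feasible point `xs`, the abstract GMFCQ (only `λ = 0` in the limiting
normal cone `N_Δ(F(xs))` satisfies `DF(xs)ᵀ λ = 0`) is equivalent to MPVC-GMFCQ (the only
multiplier satisfying conditions (i)–(ii) at `xs` is zero). -/
theorem GMFCQ_abstract_iff_MPVC_GMFCQ {n m l q : ℕ}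
    (g : Fin m → (Fin n → ℝ) → ℝ) (h : Fin l → (Fin n → ℝ) → ℝ)
    (G H : Fin q → (Fin n → ℝ) → ℝ)
    (hg : ∀ i, ContDiff ℝ 1 (g i)) (hh : ∀ j, ContDiff ℝ 1 (h j))
    (hG : ∀ i, ContDiff ℝ 1 (G i)) (hH : ∀ i, ContDiff ℝ 1 (H i))
    (xs : Fin n → ℝ) (hxs : xs ∈ feasSet g h G H) :
    (∀ lam ∈ limitingNormal DeltaVC (FF g h G H xs),
        (∀ v : Fin n → ℝ, dotY lam (fderiv ℝ (FF g h G H) xs v) = 0) → lam = 0)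
    ↔ (∀ (lam : Fin m → ℝ) (mu : Fin l → ℝ) (etaG etaH : Fin q → ℝ),
        MultCond g h G H xs lam mu etaG etaH → lam = 0 ∧ mu = 0 ∧ etaG = 0 ∧ etaH = 0) := by
  have hd {f : (Fin n → ℝ) → ℝ} (hf : ContDiff ℝ 1 f) : DifferentiableAt ℝ f xs :=
    hf.differentiable one_ne_zero xs
  have hmult {lam mu etaG etaH} := multCond_iff (lam := lam) (mu := mu) (etaG := etaG)
    (etaH := etaH) g h G H hxs (hd <| hg ·) (hd <| hh ·) (hd <| hG ·) (hd <| hH ·)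
  rw [limitingNormal_DeltaVC (FF_mem_DeltaVC g h G H hxs)]
  constructor
  · intro hGMFCQ lam mu etaG etaH hmc
    obtain ⟨hstat, hcone⟩ := hmult.1 hmc
    exact multVec_eq_zero_iff.1 (hGMFCQ _ hcone hstat)
  · intro hMPVC v hcone hstat
    obtain ⟨lam, mu, etaG, etaH, rfl⟩ := multVec_surjective v
    exact multVec_eq_zero_iff.2 (hMPVC _ _ _ _ (hmult.2 ⟨hstat, hcone⟩))
end

section
/- Consider the MPVC in ℝ² with m = 1, l = 0, q = 1 given by g(x) = x₁ + x₂, H(x) = x₁, G(x) = x₁² − x₂². The point x* = (0,0) is feasible, and MPVC-generalized quasinormality FAILS at x*: the nonzero multiplier (λ, η^G, η^H) = (0, 1, 0) satisfies conditions (i)–(ii) at x* (note ∇G(x*) = (0,0)), and the sequence x^k = (1/k, 0) converges to x* with G(x^k) = 1/k² > 0 for all k, so the sequence condition (iii) of quasinormality is met. -/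
open Filter Topology

/-- The feasible set of the MPVC with `g(x) = x₁ + x₂`, `H(x) = x₁`, `G(x) = x₁² - x₂²`
(so the vanishing constraint reads `G(x)·H(x) = (x₁² - x₂²)·x₁ ≤ 0`). -/
def feasEx3 : Set (ℝ × ℝ) :=
  {x | x.1 + x.2 ≤ 0 ∧ 0 ≤ x.1 ∧ (x.1 ^ 2 - x.2 ^ 2) * x.1 ≤ 0}

theorem zero_mem_feasEx3 : ((0:ℝ), (0:ℝ)) ∈ feasEx3 := by
  simp [feasEx3]

theorem fderiv_fst_sq_sub_snd_sq_zero {𝕜 : Type*} [NontriviallyNormedField 𝕜] :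
    fderiv 𝕜 (fun x : 𝕜 × 𝕜 => x.1 ^ 2 - x.2 ^ 2) 0 = 0 := by
  have h := (hasFDerivAt_fst (𝕜 := 𝕜) (p := (0 : 𝕜 × 𝕜)) |>.pow 2).sub
    (hasFDerivAt_snd (𝕜 := 𝕜) (p := (0 : 𝕜 × 𝕜)) |>.pow 2)
  exact h.fderiv.trans (by ext <;> simp)

theorem tendsto_one_div_succ_prodMk_zero :
    Tendsto (fun k : ℕ => (1 / ((k : ℝ) + 1), (0 : ℝ))) atTop (𝓝 (0, 0)) :=
  tendsto_one_div_add_atTop_nhds_zero_nat.prodMk_nhds tendsto_const_nhds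

/-- For the MPVC with `g(x) = x₁ + x₂`, `H(x) = x₁`, `G(x) = x₁² - x₂²`,
the point `x* = (0,0)` is feasible and MPVC-generalized quasinormality fails at `x*`:
the nonzero multiplier `(λ, η^G, η^H) = (0, 1, 0)` satisfies conditions (i)–(ii) at `x*`
(note `∇G(x*) = (0,0)`), and the sequence `x^k = (1/k, 0) → x*` satisfies the sequence
condition (iii) of quasinormality, since `G(x^k) = 1/k² > 0` for all `k`. -/
theorem example3_genQuasinormal_fails :
    ((0:ℝ), (0:ℝ)) ∈ feasEx3
    ∧ ∃ lam etaG etaH : ℝ,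
        (lam, etaG, etaH) = ((0:ℝ), (1:ℝ), (0:ℝ))
        ∧ ¬(lam = 0 ∧ etaG = 0 ∧ etaH = 0)
        ∧ lam • fderiv ℝ (fun x : ℝ × ℝ => x.1 + x.2) ((0:ℝ), (0:ℝ))
            + etaG • fderiv ℝ (fun x : ℝ × ℝ => x.1 ^ 2 - x.2 ^ 2) ((0:ℝ), (0:ℝ))
            - etaH • fderiv ℝ (fun x : ℝ × ℝ => x.1) ((0:ℝ), (0:ℝ)) = 0
        ∧ 0 ≤ lam ∧ 0 ≤ etaG ∧ etaH * etaG = 0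
        ∧ ∃ xk : ℕ → ℝ × ℝ,
            (∀ k : ℕ, xk k = (1 / ((k : ℝ) + 1), 0))
            ∧ Tendsto xk atTop (𝓝 ((0:ℝ), (0:ℝ)))
            ∧ ∀ k, (0 < lam → 0 < lam * ((xk k).1 + (xk k).2))
                ∧ (etaH ≠ 0 → etaH * (xk k).1 < 0)
                ∧ (0 < etaG → 0 < etaG * ((xk k).1 ^ 2 - (xk k).2 ^ 2)) := by
  have hG : fderiv ℝ (fun x : ℝ × ℝ => x.1 ^ 2 - x.2 ^ 2) ((0:ℝ), (0:ℝ)) = 0 :=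
    fderiv_fst_sq_sub_snd_sq_zero
  refine ⟨zero_mem_feasEx3, 0, 1, 0, rfl, by norm_num, by simp [hG], le_rfl, zero_le_one,
    by ring, _, fun _ => rfl, tendsto_one_div_succ_prodMk_zero, fun k => ⟨by simp, by simp, ?_⟩⟩
  intro _
  norm_num
  positivity
end

section
/- Let Ω = {(a,b) ∈ ℝ² : b ≥ 0 and ab ≤ 0}. For every (a,b) ∈ ℝ², the distance from (a,b) to Ω with respect to the ℓ¹-norm equals max{0, −b, min{a, b}}. -/
open Filter Topology

/-!
Every point `(u, v)` of `Ω` has `v ≥ 0`, which costs at least `-b`, and either `u ≤ 0` or `v = 0`,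
which costs at least `a` resp. `b`; hence the distance is at least `max{0, -b, min{a, b}}`.
Conversely one of the points `(a, 0)`, `(a, b)`, `(0, b)` of `Ω` attains this bound.
-/

lemma nonpos_or_eq_zero_of_mem_OmegaVC {w : ℝ × ℝ} (hw : w ∈ OmegaVC) : w.1 ≤ 0 ∨ w.2 = 0 := by
  obtain ⟨hv, huv⟩ := hw
  rcases le_or_gt w.1 0 with hu | hu
  · exact Or.inl hu
  · exact Or.inr (le_antisymm (nonpos_of_mul_nonpos_right huv hu) hv)

lemma max_le_l1_dist_of_mem_OmegaVC (a b : ℝ) {w : ℝ × ℝ} (hw : w ∈ OmegaVC) :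
    max 0 (max (-b) (min a b)) ≤ |a - w.1| + |b - w.2| := by
  refine max_le (by positivity) (max_le ?_ ?_)
  · linarith [hw.1, neg_le_abs (b - w.2), abs_nonneg (a - w.1)]
  · rcases nonpos_or_eq_zero_of_mem_OmegaVC hw with h | h
    · linarith [min_le_left a b, le_abs_self (a - w.1), abs_nonneg (b - w.2)]
    · linarith [min_le_right a b, le_abs_self (b - w.2), abs_nonneg (a - w.1)]

lemma exists_mem_OmegaVC_l1_dist_le (a b : ℝ) :
    ∃ w ∈ OmegaVC, |a - w.1| + |b - w.2| ≤ max 0 (max (-b) (min a b)) := by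
  rcases le_or_gt b 0 with hb | hb
  · exact ⟨(a, 0), ⟨le_rfl, by simp⟩, by simp [abs_of_nonpos hb]⟩
  rcases le_or_gt a 0 with ha | ha
  · exact ⟨(a, b), ⟨hb.le, mul_nonpos_of_nonpos_of_nonneg ha hb.le⟩, by simp⟩
  rcases le_total a b with hab | hba
  · exact ⟨(0, b), ⟨hb.le, by simp⟩, by simp [abs_of_pos ha, hab]⟩
  · exact ⟨(a, 0), ⟨le_rfl, by simp⟩, by simp [abs_of_pos hb, hba]⟩

/-- For every `(a,b) ∈ ℝ²`, the ℓ¹-distance from `(a,b)` to `Ω` equals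
`max{0, -b, min{a, b}}`. -/
theorem l1DistOmega_eq (a b : ℝ) :
    l1DistOmega (a, b) = max 0 (max (-b) (min a b)) := by
  obtain ⟨w, hw, hle⟩ := exists_mem_OmegaVC_l1_dist_le a b
  refine IsLeast.csInf_eq ⟨⟨w, hw, le_antisymm hle (max_le_l1_dist_of_mem_OmegaVC a b hw)⟩, ?_⟩
  rintro _ ⟨v, hv, rfl⟩
  exact max_le_l1_dist_of_mem_OmegaVC a b hv
end

section
/- Let F : ℝ^n → ℝ^t be continuously differentiable, let Δ ⊆ ℝ^t be a nonempty closed set, let x* satisfy F(x*) ∈ Δ, and define the perturbation map M(p) = {x ∈ ℝ^n : F(x) + p ∈ Δ} for p ∈ ℝ^t (so M(0) = F⁻¹(Δ)). Then the following are equivalent: (1) M is calm at (0, x*), i.e., there exist neighborhoods U of 0 in ℝ^t and V of x* in ℝ^n and a constant L ≥ 0 such that for all p ∈ U and all x ∈ M(p) ∩ V there exists y ∈ M(0) with ‖x − y‖ ≤ L‖p‖; (2) a local error bound holds at x*, i.e., there exist δ > 0 and c > 0 such that dist(x, F⁻¹(Δ)) ≤ c·dist(F(x), Δ) for all x with ‖x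 − x*‖ < δ. -/
/-!
Choosing `p` as the shortest perturbation that pushes `F x` into `Δ` gives `‖p‖ = dist(F x, Δ)`,
which is small near `x*` by continuity, so calmness at that `p` is the error bound. Conversely,
any `p` with `F x + p ∈ Δ` has `dist(F x, Δ) ≤ ‖p‖`, and the error bound is attained by a nearest
point of the closed set `F⁻¹(Δ)`, so calmness holds with `U` the whole space.
-/

open Filter Topology Metric

section

variable {X Y : Type*} [SeminormedAddCommGroup X] [SeminormedAddCommGroup Y]

theorem infDist_le_norm_of_add_mem {Δ : Set Y} {z p : Y} (h : z + p ∈ Δ) :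
    infDist z Δ ≤ ‖p‖ :=
  (infDist_le_dist_of_mem h).trans_eq (dist_self_add_right p z)

theorem exists_add_mem_norm_eq_infDist [ProperSpace Y] {Δ : Set Y} (hΔ : IsClosed Δ)
    (hne : Δ.Nonempty) (z : Y) : ∃ p, z + p ∈ Δ ∧ ‖p‖ = infDist z Δ := by
  obtain ⟨d, hd, hdist⟩ := hΔ.exists_infDist_eq_dist hne z
  exact ⟨d - z, by simpa using hd, by rw [hdist, dist_eq_norm']⟩

theorem eventually_infDist_preimage_le_of_calm [ProperSpace Y] {F : X → Y} {Δ : Set Y}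
    {xs : X} (hF : ContinuousAt F xs) (hΔ : IsClosed Δ) (hxs : F xs ∈ Δ)
    {U : Set Y} {V : Set X} {L : ℝ} (hU : U ∈ 𝓝 0) (hV : V ∈ 𝓝 xs)
    (hcalm : ∀ p ∈ U, ∀ x ∈ V, F x + p ∈ Δ → ∃ y, F y ∈ Δ ∧ ‖x - y‖ ≤ L * ‖p‖) :
    ∀ᶠ x in 𝓝 xs, infDist x (F ⁻¹' Δ) ≤ L * infDist (F x) Δ := by
  obtain ⟨ε, hε, hεU⟩ := Metric.mem_nhds_iff.1 hU
  have hdist : Tendsto (fun x => infDist (F x) Δ) (𝓝 xs) (𝓝 0) := by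
    simpa [Function.comp_def, infDist_zero_of_mem hxs] using ((continuous_infDist_pt Δ).tendsto (F xs)).comp hF
  filter_upwards [hV, (tendsto_order.1 hdist).2 ε hε] with x hxV hxε
  obtain ⟨p, hpΔ, hp⟩ := exists_add_mem_norm_eq_infDist hΔ ⟨_, hxs⟩ (F x)
  obtain ⟨y, hy, hxy⟩ := hcalm p (hεU (mem_ball_zero_iff.2 (hp ▸ hxε))) x hxV hpΔ
  calc infDist x (F ⁻¹' Δ) ≤ ‖x - y‖ := (infDist_le_dist_of_mem (s := F ⁻¹' Δ) hy).trans_eq (dist_eq_norm x y)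
    _ ≤ L * infDist (F x) Δ := hp ▸ hxy

theorem exists_mem_preimage_norm_sub_le_of_infDist_le [ProperSpace X] {F : X → Y} {Δ : Set Y}
    (hF : Continuous F) (hΔ : IsClosed Δ) {xs x : X} (hxs : F xs ∈ Δ) {c : ℝ} (hc : 0 ≤ c)
    (hx : infDist x (F ⁻¹' Δ) ≤ c * infDist (F x) Δ) {p : Y} (hp : F x + p ∈ Δ) :
    ∃ y, F y ∈ Δ ∧ ‖x - y‖ ≤ c * ‖p‖ := by
  obtain ⟨y, hy, hyx⟩ := (hΔ.preimage hF).exists_infDist_eq_dist ⟨xs, hxs⟩ x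
  refine ⟨y, hy, ?_⟩
  calc ‖x - y‖ = infDist x (F ⁻¹' Δ) := by rw [hyx, dist_eq_norm]
    _ ≤ c * ‖p‖ := hx.trans (mul_le_mul_of_nonneg_left (infDist_le_norm_of_add_mem hp) hc)

end

theorem calm_iff_local_error_bound_general {n t : ℕ}
    (F : (Fin n → ℝ) → (Fin t → ℝ)) (hF : ContDiff ℝ 1 F)
    (Δ : Set (Fin t → ℝ)) (hΔclosed : IsClosed Δ)
    (xs : Fin n → ℝ) (hxs : F xs ∈ Δ) :
    (∃ (U : Set (Fin t → ℝ)) (V : Set (Fin n → ℝ)) (L : ℝ),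
        U ∈ 𝓝 (0 : Fin t → ℝ) ∧ V ∈ 𝓝 xs ∧ 0 ≤ L ∧
        ∀ p ∈ U, ∀ x ∈ V, F x + p ∈ Δ →
          ∃ y : Fin n → ℝ, F y ∈ Δ ∧ ‖x - y‖ ≤ L * ‖p‖)
    ↔ (∃ δ c : ℝ, 0 < δ ∧ 0 < c ∧
        ∀ x : Fin n → ℝ, ‖x - xs‖ < δ →
          Metric.infDist x (F ⁻¹' Δ) ≤ c * Metric.infDist (F x) Δ) := by
  constructor
  · rintro ⟨U, V, L, hU, hV, -, hcalm⟩
    obtain ⟨δ, hδ, hbound⟩ := Metric.eventually_nhds_iff.1 <|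
      eventually_infDist_preimage_le_of_calm hF.continuous.continuousAt hΔclosed hxs hU hV hcalm
    refine ⟨δ, max L 1, hδ, one_pos.trans_le (le_max_right L 1), fun x hx => ?_⟩
    exact (hbound (by rwa [dist_eq_norm])).trans
      (mul_le_mul_of_nonneg_right (le_max_left L 1) infDist_nonneg)
  · rintro ⟨δ, c, hδ, hc, hbound⟩
    refine ⟨Set.univ, ball xs δ, c, univ_mem, ball_mem_nhds xs hδ, hc.le, fun p _ x hx hp => ?_⟩
    exact exists_mem_preimage_norm_sub_le_of_infDist_le hF.continuous hΔclosed hxs hc.le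
      (hbound x (mem_ball_iff_norm.1 hx)) hp

/-- Let `F : ℝⁿ → ℝᵗ` be continuously differentiable, `Δ ⊆ ℝᵗ` nonempty and
closed, and `F(x*) ∈ Δ`. For the perturbation map `M(p) = {x : F(x) + p ∈ Δ}` (so
`M(0) = F⁻¹(Δ)`), calmness of `M` at `(0, x*)` is equivalent to a local error bound at `x*`. -/
theorem calm_iff_local_error_bound {n t : ℕ}
    (F : (Fin n → ℝ) → (Fin t → ℝ)) (hF : ContDiff ℝ 1 F)
    (Δ : Set (Fin t → ℝ)) (hΔclosed : IsClosed Δ) (hΔne : Δ.Nonempty)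
    (xs : Fin n → ℝ) (hxs : F xs ∈ Δ) :
    (∃ (U : Set (Fin t → ℝ)) (V : Set (Fin n → ℝ)) (L : ℝ),
        U ∈ 𝓝 (0 : Fin t → ℝ) ∧ V ∈ 𝓝 xs ∧ 0 ≤ L ∧
        ∀ p ∈ U, ∀ x ∈ V, F x + p ∈ Δ →
          ∃ y : Fin n → ℝ, F y ∈ Δ ∧ ‖x - y‖ ≤ L * ‖p‖)
    ↔ (∃ δ c : ℝ, 0 < δ ∧ 0 < c ∧
        ∀ x : Fin n → ℝ, ‖x - xs‖ < δ →
          Metric.infDist x (F ⁻¹' Δ) ≤ c * Metric.infDist (F x) Δ) :=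
  calm_iff_local_error_bound_general F hF Δ hΔclosed xs hxs
end
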